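/- arXiv:1803.01583 — 6 statements merged into one kernel-verified Lean document; each statement's English description precedes it below -/
import Mathlib

section
/- Let G be a finite group and N a proper subgroup of G (not necessarily normal). Then M'_{G,N} = - Σ_{C ≤ N, C cyclic} φ(|C|) - Σ_{Y < G, Y ≰ N} M'_{Y, Y∩N}, where the first sum runs over all cyclic subgroups C of N, φ is the Euler totient function, and the second sum runs over all proper subgroups Y of G not contained in N. -/
open scoped Classical Pointwise

noncomputable instance (G : Type*) [Group G] [Finite G] : Fintype (Subgroup G) :=
  Fintype.ofFinite _

/-- The Möbius function of the subgroup lattice of a finite group `G`, defined as the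
matrix inverse of the zeta matrix whose `(K, D)` entry is `1` if `K ≤ D` and `0` otherwise. -/
noncomputable def subgroupMu (G : Type*) [Group G] [Finite G] :
    Matrix (Subgroup G) (Subgroup G) ℚ :=
  (Matrix.of fun K D : Subgroup G => if K ≤ D then (1 : ℚ) else 0)⁻¹

/-- `M'_{G,H} = Σ_{X ≤ H} |X| · μ(X, G)` where `μ` is the Möbius function of the subgroup
lattice of `G`. -/
noncomputable def Mprime (G : Type*) [Group G] [Finite G] (H : Subgroup G) : ℚ :=
  ∑ X : Subgroup G, if X ≤ H then (Nat.card X : ℚ) * subgroupMu G X ⊤ else 0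

/-!
Write `μ` for the Möbius function of the subgroup lattice of `G`. The subgroup lattice of `Y` is
the interval `[⊥, Y]` of that of `G`, and Möbius functions only see intervals, so
`M'_{Y, Y ∩ N} = Σ_{X ≤ N} |X| μ(X, Y)` for every `Y`, including `Y = G`. Summing over all
`Y ≰ N` and exchanging the sums, `Σ_{Y ≰ N} μ(X, Y) = δ_{X,G} - δ_{X,N}` leaves only `-|N|`.
Finally `|N| = Σ_{C ≤ N cyclic} φ(|C|)`, sorting the elements of `N` by the cyclic subgroup they
generate.
-/

open Finset IncidenceAlgebra

namespace IncidenceAlgebra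

section Poset
variable {𝕜 α : Type*} [PartialOrder α] [LocallyFiniteOrder α]

theorem mu_map_of_ordConnected {β : Type*} [Ring 𝕜] [PartialOrder β] [LocallyFiniteOrder β]
    (e : α ↪o β) (he : (Set.range e).OrdConnected) (a b : α) :
    mu 𝕜 (e a) (e b) = mu 𝕜 a b := by
  let g : IncidenceAlgebra 𝕜 α :=
    ⟨fun a b => mu 𝕜 (e a) (e b), fun _ _ h => apply_eq_zero_of_not_le (e.le_iff_le.not.2 h) _⟩
  have hIcc (a c : α) : (Icc a c).map e.toEmbedding = Icc (e a) (e c) := by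
    apply coe_injective
    push_cast
    exact e.image_Icc he a c
  have hg : g * zeta 𝕜 = 1 := by
    ext a c
    calc (g * zeta 𝕜 : IncidenceAlgebra 𝕜 α) a c = ∑ x ∈ Icc a c, mu 𝕜 (e a) (e x) := by
          rw [mul_apply]
          refine sum_congr rfl fun x hx => ?_
          simp [g, (mem_Icc.1 hx).2]
      _ = ∑ y ∈ Icc (e a) (e c), mu 𝕜 (e a) y := by rw [← hIcc, sum_map]; rfl
      _ = (1 : IncidenceAlgebra 𝕜 α) a c := by simp [sum_Icc_mu_right]
  exact congr($(left_inv_eq_right_inv hg zeta_mul_mu) a b)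

variable [Fintype α]

theorem matrix_of_mul [NonUnitalNonAssocSemiring 𝕜] (f g : IncidenceAlgebra 𝕜 α) :
    Matrix.of ⇑(f * g) = Matrix.of ⇑f * Matrix.of ⇑g := by
  ext a c
  rw [Matrix.of_apply, mul_apply, Matrix.mul_apply]
  refine sum_subset (subset_univ _) fun x _ hx => ?_
  rcases not_and_or.1 (mem_Icc.not.1 hx) with h | h <;> simp [apply_eq_zero_of_not_le h]

theorem inv_zeta_matrix_eq_mu [CommRing 𝕜] :
    (Matrix.of fun a b : α => if a ≤ b then (1 : 𝕜) else 0)⁻¹ =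
      Matrix.of ⇑(mu 𝕜 : IncidenceAlgebra 𝕜 α) :=
  Matrix.inv_eq_right_inv <| by
    rw [show Matrix.of (fun a b : α => if a ≤ b then (1 : 𝕜) else 0) = Matrix.of ⇑(zeta 𝕜) from rfl,
      ← matrix_of_mul, zeta_mul_mu]
    ext a b
    simp [Matrix.one_apply]

theorem sum_le_mu [Ring 𝕜] (a n : α) : ∑ y with y ≤ n, mu 𝕜 a y = if a = n then 1 else 0 := by
  rw [← sum_Icc_mu_right]
  refine (sum_subset (fun y hy => ?_) fun y hy hy' => ?_).symm
  · simpa using (mem_Icc.1 hy).2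
  · refine apply_eq_zero_of_not_le (fun hay => hy' (mem_Icc.2 ⟨hay, ?_⟩)) _
    simpa using hy

theorem sum_not_le_mu [Ring 𝕜] [OrderTop α] (a n : α) :
    ∑ y with ¬ y ≤ n, mu 𝕜 a y = (if a = ⊤ then 1 else 0) - if a = n then 1 else 0 := by
  rw [← sum_le_mu a n, ← sum_le_mu a ⊤, eq_sub_iff_add_eq, sum_filter_not_add_sum_filter]
  simp

theorem sum_mul_mu_top [Ring 𝕜] [OrderTop α] (w : α → 𝕜) {n : α} (hn : n ≠ ⊤) :
    ∑ x with x ≤ n, w x * mu 𝕜 x ⊤ =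
      -w n - ∑ y with y ≠ ⊤ ∧ ¬ y ≤ n, ∑ x with x ≤ n, w x * mu 𝕜 x y := by
  have hsum : ∑ y with ¬ y ≤ n, ∑ x with x ≤ n, w x * mu 𝕜 x y = -w n := by
    rw [sum_comm' (t' := univ.filter (· ≤ n)) (s' := fun _ => univ.filter (¬ · ≤ n)) (by simp)]
    calc ∑ x with x ≤ n, ∑ y with ¬ y ≤ n, w x * mu 𝕜 x y
        = ∑ x with x ≤ n, -(w x * if x = n then 1 else 0) := by
          refine sum_congr rfl fun x hx => ?_
          have hx : x ≠ ⊤ := fun h => hn (top_le_iff.1 (h ▸ (mem_filter.1 hx).2))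
          rw [← mul_sum, sum_not_le_mu, if_neg hx, zero_sub, mul_neg]
      _ = -w n := by simp
  have hsplit : univ.filter (fun y : α => ¬ y ≤ n) =
      insert ⊤ (univ.filter fun y => y ≠ ⊤ ∧ ¬ y ≤ n) := by
    ext y
    by_cases hy : y = ⊤ <;> simp [hy, hn]
  rw [hsplit, sum_insert (by simp)] at hsum
  exact eq_sub_of_add_eq hsum

end Poset
end IncidenceAlgebra

namespace Subgroup
variable {G : Type*} [Group G]

theorem zpowers_eq_iff [Finite G] {g : G} {C : Subgroup G} :
    zpowers g = C ↔ g ∈ C ∧ orderOf g = Nat.card C := by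
  refine ⟨fun h => h ▸ ⟨mem_zpowers g, (Nat.card_zpowers g).symm⟩, fun ⟨hg, hord⟩ => ?_⟩
  exact eq_of_le_of_card_ge (zpowers_le.2 hg) (by rw [Nat.card_zpowers, hord])

theorem card_filter_zpowers_eq [Fintype G] (C : Subgroup G) [IsCyclic C] :
    #{g : G | zpowers g = C} = Nat.totient (Nat.card C) := by
  calc #{g : G | zpowers g = C}
      = #(({a : C | orderOf a = Fintype.card C} : Finset C).map (.subtype _)) := by
        congr 1
        ext g
        simp [zpowers_eq_iff, Nat.card_eq_fintype_card, and_comm]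
    _ = Nat.totient (Nat.card C) := by
        rw [card_map, IsCyclic.card_orderOf_eq_totient dvd_rfl, Nat.card_eq_fintype_card]

theorem card_eq_sum_totient [Finite G] (H : Subgroup G) :
    Nat.card H = ∑ C with C ≤ H ∧ IsCyclic C, Nat.totient (Nat.card C) := by
  have := Fintype.ofFinite G
  rw [Nat.card_eq_fintype_card, Fintype.card_subtype,
    card_eq_sum_card_fiberwise (f := zpowers) (t := univ) (by simp), sum_filter]
  refine sum_congr rfl fun C _ => ?_
  split_ifs with hC
  · obtain ⟨hCH, _⟩ := hC
    rw [← card_filter_zpowers_eq C, filter_filter]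
    congr 1
    ext g
    simp only [mem_filter, mem_univ, true_and, and_iff_right_iff_imp]
    exact fun h => hCH (h ▸ mem_zpowers g)
  · rw [card_eq_zero, filter_eq_empty_iff]
    rintro g hg rfl
    exact hC ⟨zpowers_le.2 (mem_filter.1 hg).2, inferInstance⟩

noncomputable instance [Finite G] : LocallyFiniteOrder (Subgroup G) :=
  Fintype.toLocallyFiniteOrder

def mapSubtypeEmbedding (Y : Subgroup G) : Subgroup Y ↪o Subgroup G :=
  (MapSubtype.orderIso Y).toOrderEmbedding.trans (OrderEmbedding.subtype _)

theorem mapSubtypeEmbedding_apply (Y : Subgroup G) (X : Subgroup Y) :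
    Y.mapSubtypeEmbedding X = X.map Y.subtype := rfl

theorem mapSubtypeEmbedding_top (Y : Subgroup G) : Y.mapSubtypeEmbedding ⊤ = Y := by
  rw [mapSubtypeEmbedding_apply, ← MonoidHom.range_eq_map, range_subtype]

theorem range_mapSubtypeEmbedding (Y : Subgroup G) :
    Set.range Y.mapSubtypeEmbedding = Set.Iic Y := by
  ext Z
  refine ⟨?_, fun h => ⟨Z.subgroupOf Y, map_subgroupOf_eq_of_le h⟩⟩
  rintro ⟨X, rfl⟩
  exact map_subtype_le X

end Subgroup

open Subgroup

theorem Mprime_eq_sum_mu {G : Type*} [Group G] [Finite G] (H : Subgroup G) :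
    Mprime G H = ∑ X with X ≤ H, (Nat.card X : ℚ) * mu ℚ X ⊤ := by
  rw [Mprime, subgroupMu, inv_zeta_matrix_eq_mu, sum_filter]
  rfl

theorem Mprime_subgroupOf {G : Type*} [Group G] [Finite G] (N Y : Subgroup G) :
    Mprime Y (N.subgroupOf Y) = ∑ X with X ≤ N, (Nat.card X : ℚ) * mu ℚ X Y := by
  rw [Mprime_eq_sum_mu, sum_filter, sum_filter]
  refine Fintype.sum_of_injective _ Y.mapSubtypeEmbedding.injective _ _ (fun Z hZ => ?_) fun X => ?_
  · rw [range_mapSubtypeEmbedding, Set.mem_Iic] at hZ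
    simp [apply_eq_zero_of_not_le hZ]
  · have hmu : mu ℚ X ⊤ = mu ℚ (X.map Y.subtype) Y := by
      rw [← mu_map_of_ordConnected Y.mapSubtypeEmbedding
        (by rw [range_mapSubtypeEmbedding]; exact Set.ordConnected_Iic), mapSubtypeEmbedding_top,
        mapSubtypeEmbedding_apply]
    rw [mapSubtypeEmbedding_apply, hmu, Subgroup.card_subtype, map_le_iff_le_comap]
    rfl

/-- For a finite group `G` and a proper subgroup `N`,
`M'_{G,N} = - Σ_{C ≤ N, C cyclic} φ(|C|) - Σ_{Y < G, Y ≰ N} M'_{Y, Y ∩ N}`,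
where in `M'_{Y, Y ∩ N}` the Möbius function of the subgroup lattice of `Y` is used. -/
theorem Mprime_recursion (G : Type*) [Group G] [Finite G]
    (N : Subgroup G) (hN : N ≠ ⊤) :
    Mprime G N =
      -(∑ C : Subgroup G,
          if C ≤ N ∧ IsCyclic ↥C then (Nat.totient (Nat.card C) : ℚ) else 0)
      - ∑ Y : Subgroup G,
          if Y ≠ ⊤ ∧ ¬ Y ≤ N then Mprime ↥Y (N.subgroupOf Y) else 0 := by
  rw [← sum_filter, ← sum_filter, ← Nat.cast_sum, ← card_eq_sum_totient,
    sum_congr rfl fun Y _ => Mprime_subgroupOf N Y, Mprime_eq_sum_mu]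
  exact sum_mul_mu_top _ hN
end

section
/- Let G be a finite group and N a proper subgroup of G (not necessarily normal). Then M'_{G,N} = Σ_{C ≤ N, C cyclic} χ̃(T_C(G,N)) · φ(|C|), where the sum runs over all cyclic subgroups C of N, φ is the Euler totient function, and χ̃(T_C(G,N)) is the reduced Euler characteristic of the order complex of the poset T_C(G,N). -/
open scoped Classical Pointwise

/-- The number of strictly increasing chains `X₀ < X₁ < ⋯ < X_i` of `i+1` elements of a
set `T` of subgroups of `G`. -/
noncomputable def chainCount (G : Type*) [Group G] (T : Set (Subgroup G)) (i : ℕ) : ℕ :=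
  Nat.card {f : Fin (i + 1) → Subgroup G // StrictMono f ∧ ∀ j, f j ∈ T}

/-- The Euler characteristic `χ(T) = Σ_{i ≥ 0} (-1)^i c_i` of the order complex of a poset
`T` of subgroups, where `c_i` is the number of strictly increasing chains of `i+1` elements. -/
noncomputable def eulerChar (G : Type*) [Group G] (T : Set (Subgroup G)) : ℚ :=
  ∑ᶠ i : ℕ, (-1 : ℚ) ^ i * (chainCount G T i : ℚ)

/-- The reduced Euler characteristic `χ̃(T) = -1 + χ(T)` of the order complex of a poset of
subgroups. -/
noncomputable def reducedEulerChar (G : Type*) [Group G] (T : Set (Subgroup G)) : ℚ :=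
  -1 + eulerChar G T

/-!
Counting the elements of `X` according to the cyclic subgroup they generate gives
`|X| = Σ_{C ≤ X cyclic} φ(|C|)`, so `M'_{G,N} = Σ_C φ(|C|) Σ_{C ≤ X ≤ N} μ(X, G)`.
For `C < G` the Möbius recursion `Σ_{C ≤ X} μ(X, G) = 0` turns the inner sum into
`-1 - Σ_{X ∈ T_C} μ(X, G)`. By Philip Hall's theorem `μ(X, G) = χ̃((X, G))`, and since `T_C` is
upward closed among the proper subgroups, sorting the chains of `T_C` by their minimum gives
`Σ_{X ∈ T_C} χ̃((X, G)) = -χ(T_C)`. The same decomposition of chains shows that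
`X ↦ χ̃((X, G))` satisfies the recursion characterising `μ(·, G)`, which proves Hall's theorem.
-/

theorem Finset.sum_filter_le_eq_add_sum_Ioo_add {α M : Type*} [Fintype α] [PartialOrder α]
    [OrderTop α] [AddCommMonoid M] (f : α → M) {a : α} (ha : a ≠ ⊤) :
    ∑ y with a ≤ y, f y = f a + ∑ y with y ∈ Set.Ioo a ⊤, f y + f ⊤ := by
  have hsplit : ∀ y, (if a ≤ y then f y else 0) =
      ((if y = a then f y else 0) + if y ∈ Set.Ioo a ⊤ then f y else 0) +
        if y = ⊤ then f y else 0 := by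
    intro y
    rcases eq_or_ne y a with rfl | hya
    · simp [ha]
    rcases eq_or_ne y ⊤ with rfl | hyt
    · simp [hya]
    simp [hya, hyt, lt_top_iff_ne_top, le_iff_lt_or_eq, hya.symm]
  simp only [Finset.sum_filter, hsplit, Finset.sum_add_distrib, Finset.sum_ite_eq',
    Finset.mem_univ, if_true]

theorem Set.inter_Ioi_eq_Ioo_of_upper {α : Type*} [Preorder α] {T : Set α} {b : α}
    (hT : T ⊆ Set.Iio b) (hT_upper : ∀ ⦃x y⦄, x ∈ T → x ≤ y → y < b → y ∈ T) {a : α}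
    (ha : a ∈ T) : T ∩ Set.Ioi a = Set.Ioo a b :=
  Set.ext fun _ => ⟨fun ⟨hy, hay⟩ => ⟨hay, hT hy⟩, fun ⟨hay, hyb⟩ => ⟨hT_upper ha hay.le hyb, hay⟩⟩

namespace SubgroupLattice

section Cyclic

variable {G : Type*} [Group G]

theorem card_zpowers_eq_totient (C : Subgroup G) [IsCyclic C] [Finite C] :
    Nat.card {g : G // Subgroup.zpowers g = C} = Nat.totient (Nat.card C) := by
  have := Fintype.ofFinite C
  rw [Nat.card_eq_fintype_card (α := C), ← IsCyclic.card_orderOf_eq_totient dvd_rfl,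
    ← Fintype.card_subtype, ← Nat.card_eq_fintype_card]
  exact Nat.card_congr
    { toFun := fun g => ⟨⟨g, g.2.le (Subgroup.mem_zpowers _)⟩, by
        rw [Subgroup.orderOf_mk, ← Nat.card_zpowers, g.2, Nat.card_eq_fintype_card]⟩
      invFun := fun c => ⟨c.1, Subgroup.eq_of_le_of_card_ge (Subgroup.zpowers_le.2 c.1.2) (by
        rw [Nat.card_zpowers, Subgroup.orderOf_coe, c.2, Nat.card_eq_fintype_card])⟩
      left_inv := fun _ => rfl
      right_inv := fun _ => rfl }

variable [Finite G]

theorem card_eq_sum_totient (X : Subgroup G) :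
    Nat.card X = ∑ C : Subgroup G,
      if C ≤ X ∧ IsCyclic C then Nat.totient (Nat.card C) else 0 := by
  rw [← Nat.card_congr (Equiv.sigmaFiberEquiv fun g : X => Subgroup.zpowers (g : G)),
    Nat.card_sigma]
  refine Finset.sum_congr rfl fun C _ => ?_
  split_ifs with hC
  · obtain ⟨hCX, _⟩ := hC
    rw [← card_zpowers_eq_totient]
    exact Nat.card_congr (Equiv.subtypeSubtypeEquivSubtype (q := fun g => Subgroup.zpowers g = C)
      fun hg => hCX (hg.le (Subgroup.mem_zpowers _)))
  · have : IsEmpty {g : X // Subgroup.zpowers (g : G) = C} := ⟨fun g => hC <| by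
      rw [← g.2]
      exact ⟨Subgroup.zpowers_le.2 g.1.2, inferInstance⟩⟩
    exact Nat.card_of_isEmpty

theorem Mprime_eq_sum_sum_subgroupMu_mul_totient (N : Subgroup G) :
    Mprime G N = ∑ C : Subgroup G, if C ≤ N ∧ IsCyclic C then
      (∑ X with C ≤ X ∧ X ≤ N, subgroupMu G X ⊤) * Nat.totient (Nat.card C) else 0 := by
  calc Mprime G N
      = ∑ X : Subgroup G, ∑ C : Subgroup G, if C ≤ X ∧ X ≤ N ∧ IsCyclic C then
          (Nat.totient (Nat.card C) : ℚ) * subgroupMu G X ⊤ else 0 := by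
        refine Finset.sum_congr rfl fun X _ => ?_
        rw [card_eq_sum_totient X, Nat.cast_sum, Finset.sum_mul]
        by_cases hXN : X ≤ N <;> simp [hXN, ite_mul]
    _ = _ := by
        rw [Finset.sum_comm]
        refine Finset.sum_congr rfl fun C _ => ?_
        split_ifs with hC
        · rw [Finset.sum_filter, Finset.sum_mul]
          refine Finset.sum_congr rfl fun X _ => ?_
          by_cases hCX : C ≤ X <;> by_cases hXN : X ≤ N <;> simp [hC.2, hCX, hXN, mul_comm]
        · exact Finset.sum_eq_zero fun X _ =>
            if_neg fun h => hC ⟨h.1.trans h.2.1, h.2.2⟩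

end Cyclic

section Chains

variable {G : Type*} [Group G]

theorem chainCount_zero (T : Set (Subgroup G)) : chainCount G T 0 = Nat.card T :=
  have : Subsingleton (Fin (0 + 1)) := inferInstanceAs (Subsingleton (Fin 1))
  Nat.card_congr
    { toFun := fun f => ⟨f.1 0, f.2.2 0⟩
      invFun := fun X => ⟨fun _ => X, fun a b hab => (hab.ne (Subsingleton.elim a b)).elim,
        fun _ => X.2⟩
      left_inv := fun f => Subtype.ext (funext fun j => by rw [Subsingleton.elim j 0])
      right_inv := fun _ => rfl }

def chainConsEquiv (T : Set (Subgroup G)) (i : ℕ) :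
    {f : Fin (i + 2) → Subgroup G // StrictMono f ∧ ∀ j, f j ∈ T} ≃
      Σ X : T, {g : Fin (i + 1) → Subgroup G // StrictMono g ∧ ∀ j, g j ∈ T ∩ Set.Ioi X.1} where
  toFun f :=
    have hf := Fin.strictMono_cons.1 ((Fin.cons_self_tail f.1).symm ▸ f.2.1)
    ⟨⟨f.1 0, f.2.2 0⟩, ⟨Fin.tail f.1, hf.2, fun j => ⟨f.2.2 j.succ, hf.1 j⟩⟩⟩
  invFun g := ⟨Fin.cons g.1.1 g.2.1, Fin.strictMono_cons.2 ⟨fun j => (g.2.2.2 j).2, g.2.2.1⟩,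
    Fin.cases g.1.2 fun j => (g.2.2.2 j).1⟩
  left_inv f := Subtype.ext (Fin.cons_self_tail f.1)
  right_inv _ := rfl

variable [Finite G]

theorem chainCount_succ (T : Set (Subgroup G)) [DecidablePred (· ∈ T)] (i : ℕ) :
    chainCount G T (i + 1) = ∑ X with X ∈ T, chainCount G (T ∩ Set.Ioi X) i := by
  rw [chainCount, Nat.card_congr (chainConsEquiv T i), Nat.card_sigma]
  exact (Finset.sum_subtype _ (by simp) (fun X => chainCount G (T ∩ Set.Ioi X) i)).symm

theorem chainCount_eq_zero {T : Set (Subgroup G)} {i : ℕ}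
    (hi : Nat.card (Subgroup G) < i + 1) : chainCount G T i = 0 := by
  refine Nat.card_eq_zero.mpr (Or.inl ⟨fun f => hi.not_ge ?_⟩)
  simpa using Nat.card_le_card_of_injective f.1 f.2.1.injective

theorem eulerChar_eq_sum_range (T : Set (Subgroup G)) {n : ℕ} (hn : Nat.card (Subgroup G) ≤ n) :
    eulerChar G T = ∑ i ∈ Finset.range n, (-1 : ℚ) ^ i * chainCount G T i := by
  refine finsum_eq_sum_of_support_subset _ fun i hi => ?_
  by_contra hin
  exact hi (by simp [chainCount_eq_zero (T := T) (i := i) (by simp at hin; omega)])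

theorem eulerChar_eq_neg_sum_reducedEulerChar (T : Set (Subgroup G)) [DecidablePred (· ∈ T)] :
    eulerChar G T = -∑ X with X ∈ T, reducedEulerChar G (T ∩ Set.Ioi X) := by
  set n := Nat.card (Subgroup G)
  have hcard : (chainCount G T 0 : ℚ) = ∑ X with X ∈ T, 1 := by
    simp [chainCount_zero, Nat.card_eq_fintype_card, Fintype.card_subtype]
  calc eulerChar G T
      = chainCount G T 0 + ∑ i ∈ Finset.range n, (-1 : ℚ) ^ (i + 1) * chainCount G T (i + 1) := by
        rw [eulerChar_eq_sum_range T (Nat.le_succ n), Finset.sum_range_succ', add_comm]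
        simp
    _ = ∑ X with X ∈ T, (1 - ∑ i ∈ Finset.range n,
          (-1 : ℚ) ^ i * chainCount G (T ∩ Set.Ioi X) i) := by
        simp only [hcard, chainCount_succ, Nat.cast_sum, Finset.mul_sum, Finset.sum_sub_distrib,
          pow_succ]
        rw [Finset.sum_comm, sub_eq_add_neg, ← Finset.sum_neg_distrib]
        simp
    _ = -∑ X with X ∈ T, reducedEulerChar G (T ∩ Set.Ioi X) := by
        simp only [reducedEulerChar, eulerChar_eq_sum_range _ (le_refl n),
          ← Finset.sum_neg_distrib]
        ring_nf

end Chains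

section Mobius

variable (G : Type*) [Group G] [Finite G]

noncomputable def subgroupZeta : Matrix (Subgroup G) (Subgroup G) ℚ :=
  Matrix.of fun K D : Subgroup G => if K ≤ D then (1 : ℚ) else 0

theorem blockTriangular_subgroupZeta :
    (subgroupZeta G).BlockTriangular fun X : Subgroup G => Nat.card X := by
  intro X Y hYX
  simp only [subgroupZeta, Matrix.of_apply, ite_eq_right_iff, one_ne_zero, imp_false]
  exact fun hXY => hYX.not_ge (Subgroup.card_le_of_le hXY)

theorem det_subgroupZeta : (subgroupZeta G).det = 1 := by
  rw [(blockTriangular_subgroupZeta G).det]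
  refine Finset.prod_eq_one fun k _ => ?_
  suffices (subgroupZeta G).toSquareBlock (fun X : Subgroup G => Nat.card X) k = 1 by
    rw [this, Matrix.det_one]
  ext ⟨X, hX⟩ ⟨Y, hY⟩
  have hle : X ≤ Y ↔ X = Y := ⟨fun h => Subgroup.eq_of_le_of_card_ge h (hY.trans hX.symm).le,
    le_of_eq⟩
  simp [Matrix.toSquareBlock_def, subgroupZeta, Matrix.one_apply, hle]

theorem isUnit_det_subgroupZeta : IsUnit (subgroupZeta G).det :=
  det_subgroupZeta G ▸ isUnit_one

theorem subgroupZeta_mul_subgroupMu : subgroupZeta G * subgroupMu G = 1 :=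
  Matrix.mul_nonsing_inv _ (isUnit_det_subgroupZeta G)

variable {G}

theorem subgroupZeta_mulVec (f : Subgroup G → ℚ) (X : Subgroup G) :
    (subgroupZeta G).mulVec f X = ∑ Y with X ≤ Y, f Y := by
  simp [Matrix.mulVec, dotProduct, subgroupZeta, Finset.sum_filter]

theorem sum_subgroupMu (X D : Subgroup G) :
    ∑ Y with X ≤ Y, subgroupMu G Y D = if X = D then 1 else 0 := by
  rw [← subgroupZeta_mulVec, ← Matrix.one_apply, ← subgroupZeta_mul_subgroupMu G]
  rfl

theorem subgroupMu_apply_eq_of_sum {f : Subgroup G → ℚ} {D : Subgroup G}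
    (hf : ∀ X, ∑ Y with X ≤ Y, f Y = if X = D then 1 else 0) (Y : Subgroup G) :
    subgroupMu G Y D = f Y := by
  have hunit : IsUnit (subgroupZeta G) :=
    (Matrix.isUnit_iff_isUnit_det _).2 (isUnit_det_subgroupZeta G)
  have h : (subgroupZeta G).mulVec (fun Y => subgroupMu G Y D) = (subgroupZeta G).mulVec f :=
    funext fun X => by rw [subgroupZeta_mulVec, subgroupZeta_mulVec, hf, sum_subgroupMu]
  exact congrFun (Matrix.mulVec_injective_of_isUnit hunit h) Y

theorem subgroupMu_top_top : subgroupMu G ⊤ ⊤ = 1 := by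
  simpa [top_le_iff, Finset.sum_filter] using sum_subgroupMu (⊤ : Subgroup G) ⊤

/-- Philip Hall's theorem. -/
theorem subgroupMu_eq_reducedEulerChar_Ioo {X : Subgroup G} (hX : X ≠ ⊤) :
    subgroupMu G X ⊤ = reducedEulerChar G (Set.Ioo X ⊤) := by
  set f : Subgroup G → ℚ := fun Y => if Y = ⊤ then 1 else reducedEulerChar G (Set.Ioo Y ⊤)
  suffices hf : ∀ Z, ∑ Y with Z ≤ Y, f Y = if Z = ⊤ then 1 else 0 by
    rw [subgroupMu_apply_eq_of_sum hf]
    exact if_neg hX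
  intro Z
  rcases eq_or_ne Z ⊤ with rfl | hZ
  · simp [f, top_le_iff, Finset.sum_filter]
  have hIoo : ∀ Y ∈ Set.Ioo Z ⊤, Set.Ioo Z ⊤ ∩ Set.Ioi Y = Set.Ioo Y ⊤ :=
    fun _ => Set.inter_Ioi_eq_Ioo_of_upper (fun _ h => h.2) fun _ _ hx hxy hy =>
      Set.mem_Ioo.2 ⟨(Set.mem_Ioo.1 hx).1.trans_le hxy, hy⟩
  have hχ := eulerChar_eq_neg_sum_reducedEulerChar (Set.Ioo Z ⊤)
  rw [Finset.sum_congr rfl fun Y hY => by rw [hIoo Y (Finset.mem_filter.1 hY).2]] at hχ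
  rw [Finset.sum_filter_le_eq_add_sum_Ioo_add f hZ, if_neg hZ,
    Finset.sum_congr rfl fun Y hY => if_neg (Finset.mem_filter.1 hY).2.2.ne]
  simp only [f, if_neg hZ, if_pos rfl, reducedEulerChar, hχ]
  ring

theorem sum_subgroupMu_eq_neg_eulerChar {T : Set (Subgroup G)} [DecidablePred (· ∈ T)]
    (hT : T ⊆ Set.Iio ⊤) (hT_upper : ∀ ⦃X Y⦄, X ∈ T → X ≤ Y → Y < ⊤ → Y ∈ T) :
    ∑ X with X ∈ T, subgroupMu G X ⊤ = -eulerChar G T := by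
  rw [eulerChar_eq_neg_sum_reducedEulerChar, neg_neg]
  refine Finset.sum_congr rfl fun X hX => ?_
  have hXT := (Finset.mem_filter.1 hX).2
  rw [Set.inter_Ioi_eq_Ioo_of_upper hT hT_upper hXT, subgroupMu_eq_reducedEulerChar_Ioo (hT hXT).ne]

theorem sum_subgroupMu_Icc_eq_reducedEulerChar {C N : Subgroup G} (hC : C ≠ ⊤) (hN : N ≠ ⊤) :
    ∑ X with C ≤ X ∧ X ≤ N, subgroupMu G X ⊤ =
      reducedEulerChar G {X | C ≤ X ∧ X < ⊤ ∧ ¬ X ≤ N} := by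
  set T : Set (Subgroup G) := {X | C ≤ X ∧ X < ⊤ ∧ ¬ X ≤ N}
  have hsplit : ∀ Y : Subgroup G, (if C ≤ Y then subgroupMu G Y ⊤ else 0) =
      ((if C ≤ Y ∧ Y ≤ N then subgroupMu G Y ⊤ else 0) +
        if Y ∈ T then subgroupMu G Y ⊤ else 0) + if Y = ⊤ then subgroupMu G Y ⊤ else 0 := by
    intro Y
    rcases eq_or_ne Y ⊤ with rfl | hY
    · simp [T, hN]
    by_cases hYN : Y ≤ N <;> simp [T, hY, hYN, lt_top_iff_ne_top]
  have hT_upper : ∀ ⦃X Y⦄, X ∈ T → X ≤ Y → Y < ⊤ → Y ∈ T := fun X Y ⟨hCX, _, hXN⟩ hXY hY =>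
    ⟨hCX.trans hXY, hY, fun hYN => hXN (hXY.trans hYN)⟩
  have hzero := sum_subgroupMu C ⊤
  rw [if_neg hC, Finset.sum_filter, Finset.sum_congr rfl fun Y _ => hsplit Y,
    Finset.sum_add_distrib, Finset.sum_add_distrib, ← Finset.sum_filter, ← Finset.sum_filter,
    Finset.sum_ite_eq', if_pos (Finset.mem_univ _), subgroupMu_top_top,
    sum_subgroupMu_eq_neg_eulerChar (fun X hX => hX.2.1) hT_upper] at hzero
  rw [reducedEulerChar]
  linear_combination hzero

end Mobius

end SubgroupLattice

/-- For a finite group `G` and a proper subgroup `N`,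
`M'_{G,N} = Σ_{C ≤ N, C cyclic} χ̃(T_C(G,N)) · φ(|C|)`, where
`T_C(G,N) = {X | C ≤ X < G, X ≰ N}`. -/
theorem Mprime_eq_sum_reducedEulerChar (G : Type*) [Group G] [Finite G]
    (N : Subgroup G) (hN : N ≠ ⊤) :
    Mprime G N =
      ∑ C : Subgroup G,
        if C ≤ N ∧ IsCyclic ↥C then
          reducedEulerChar G {X : Subgroup G | C ≤ X ∧ X < ⊤ ∧ ¬ X ≤ N} *
            (Nat.totient (Nat.card C) : ℚ)
        else 0 := by
  rw [SubgroupLattice.Mprime_eq_sum_sum_subgroupMu_mul_totient]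
  refine Finset.sum_congr rfl fun C _ => ?_
  split_ifs with hC
  · rw [SubgroupLattice.sum_subgroupMu_Icc_eq_reducedEulerChar (ne_top_of_le_ne_top hN hC.1) hN]
  · rfl
end

section
/- Let G be a finite non-cyclic group and N a normal subgroup of G with |G : N| = p for some prime p. If for every cyclic subgroup C of N the order complex of the poset T_C(G,N) has Euler characteristic equal to 1 (as holds, for instance, when its geometric realization is contractible), then m_{G,N} = 0. -/
open scoped Classical Pointwise

/-- `m_{G,N} = (1/|G|) · Σ_{X ≤ G, XN = G} |X| · μ(X, G)`. -/
noncomputable def mGN (G : Type*) [Group G] [Finite G] (N : Subgroup G) : ℚ :=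
  (1 / (Nat.card G : ℚ)) *
    ∑ X : Subgroup G,
      if (X : Set G) * (N : Set G) = (Set.univ : Set G)
      then (Nat.card X : ℚ) * subgroupMu G X ⊤ else 0

open scoped Classical
open Finset

namespace MGNAux
variable {S : Type*} [Fintype S] [PartialOrder S]

noncomputable def zeta (S : Type*) [Fintype S] [PartialOrder S] : Matrix S S ℚ :=
  Matrix.of fun a b => if a ≤ b then 1 else 0

noncomputable def eta (S : Type*) [Fintype S] [PartialOrder S] : Matrix S S ℚ :=
  Matrix.of fun a b => if a < b then 1 else 0

lemma zeta_eq : zeta S = 1 + eta S := by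
  ext a b
  by_cases hab : a ≤ b
  · rcases eq_or_lt_of_le hab with rfl | hlt
    · simp [zeta, eta, Matrix.one_apply, lt_irrefl]
    · simp [zeta, eta, Matrix.one_apply, hab, hlt, ne_of_lt hlt]
  · have h1 : a ≠ b := fun h => hab (le_of_eq h)
    have h2 : ¬ a < b := fun h => hab h.le
    simp [zeta, eta, Matrix.one_apply, hab, h1, h2]

lemma eta_pow_ne_zero {k : ℕ} {a b : S} (h : (eta S ^ k) a b ≠ 0) :
    ∃ f : Fin (k + 1) → S, StrictMono f ∧ f 0 = a := by
  induction k generalizing a b with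
  | zero =>
    have hlt : ∀ i j : Fin 1, ¬ i < j := by decide
    exact ⟨fun _ => a, fun i j hij => absurd hij (hlt i j), rfl⟩
  | succ k ih =>
    rw [pow_succ'] at h
    rw [Matrix.mul_apply] at h
    obtain ⟨x, hx⟩ := Finset.exists_ne_zero_of_sum_ne_zero h
    have h1 : eta S a x ≠ 0 := fun hz => hx.2 (by rw [hz, zero_mul])
    have h2 : (eta S ^ k) x b ≠ 0 := fun hz => hx.2 (by rw [hz, mul_zero])
    have hax : a < x := by
      by_contra hc; exact h1 (by simp [eta, hc])
    obtain ⟨f, hf, hf0⟩ := ih h2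
    refine ⟨Fin.cons a f, ?_, rfl⟩
    rw [Fin.strictMono_iff_lt_succ]
    intro i
    induction i using Fin.cases with
    | zero => simpa [hf0] using hax
    | succ j =>
      simpa using hf (show j.castSucc < j.succ by simp [Fin.lt_def])

lemma eta_pow_card : eta S ^ (Fintype.card S) = 0 := by
  by_contra hc
  obtain ⟨a, b, hab⟩ : ∃ a b, (eta S ^ Fintype.card S) a b ≠ 0 := by
    by_contra hz
    push_neg at hz
    exact hc (by ext a b; simp [hz a b])
  obtain ⟨f, hf, -⟩ := eta_pow_ne_zero hab
  have := Fintype.card_le_of_injective f hf.injective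
  simp at this

noncomputable def mu (S : Type*) [Fintype S] [PartialOrder S] : Matrix S S ℚ :=
  ∑ i ∈ range (Fintype.card S + 1), (-(eta S)) ^ i

lemma mu_mul_zeta : mu S * zeta S = 1 := by
  have hpow : (-(eta S)) ^ (Fintype.card S + 1) = 0 := by
    rw [neg_pow, pow_succ (eta S), eta_pow_card, zero_mul, mul_zero]
  have hg := geom_sum_mul (-(eta S)) (Fintype.card S + 1)
  rw [hpow, zero_sub] at hg
  have hg' : mu S * (-(eta S) - 1) = -1 := hg
  rw [zeta_eq]
  calc mu S * (1 + eta S) = -(mu S * (-(eta S) - 1)) := by noncomm_ring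
    _ = 1 := by rw [hg']; exact neg_neg 1

lemma zeta_mul_mu : zeta S * mu S = 1 := by
  have hc1 : Commute (zeta S) (mu S) := by
    rw [zeta_eq]
    exact (Commute.one_left (mu S)).add_left
      (Commute.sum_right _ _ _ fun i _ => (((Commute.refl (eta S)).neg_right).pow_right i))
  rw [hc1.eq]; exact mu_mul_zeta

lemma mu_eq : (zeta S)⁻¹ = mu S := Matrix.inv_eq_right_inv zeta_mul_mu

lemma eta_pow_top_apply [OrderTop S] {k : ℕ} (hk : 1 ≤ k) (b : S) :
    (eta S ^ k) (⊤ : S) b = 0 := by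
  obtain ⟨j, rfl⟩ : ∃ j, k = j + 1 := ⟨k - 1, by omega⟩
  rw [pow_succ', Matrix.mul_apply]
  refine Finset.sum_eq_zero fun x _ => ?_
  have : eta S (⊤ : S) x = 0 := by simp [eta, not_top_lt]
  rw [this, zero_mul]

lemma neg_eta_pow (i : ℕ) : (-(eta S)) ^ i = ((-1 : ℚ) ^ i) • (eta S) ^ i := by
  rw [← neg_one_smul ℚ (eta S), smul_pow]

lemma mu_top_top [OrderTop S] : mu S (⊤ : S) (⊤ : S) = 1 := by
  unfold mu
  rw [Matrix.sum_apply]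
  rw [Finset.sum_range_succ']
  have h1 : ∀ i ∈ range (Fintype.card S), ((-(eta S)) ^ (i + 1)) (⊤ : S) (⊤ : S) = 0 := by
    intro i _
    rw [neg_eta_pow, Matrix.smul_apply, eta_pow_top_apply (Nat.succ_le_succ (Nat.zero_le i)), smul_zero]
  rw [Finset.sum_congr rfl h1]
  simp [Matrix.one_apply]

end MGNAux

namespace MGNAux
variable {S : Type*} [Fintype S] [PartialOrder S]

noncomputable def etaT (T : Set S) : Matrix S S ℚ :=
  Matrix.of fun a b => if a ∈ T ∧ b ∈ T ∧ a < b then 1 else 0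

noncomputable def uT (T : Set S) : S → ℚ := fun a => if a ∈ T then 1 else 0

noncomputable def cv (T : Set S) (i : ℕ) (b : S) : ℕ :=
  (Finset.univ.filter (fun f : Fin (i + 1) → S =>
    StrictMono f ∧ (∀ j, f j ∈ T) ∧ f (Fin.last i) = b)).card

noncomputable def ccnt (T : Set S) (i : ℕ) : ℕ :=
  (Finset.univ.filter (fun f : Fin (i + 1) → S => StrictMono f ∧ ∀ j, f j ∈ T)).card

lemma cv_zero (T : Set S) (b : S) : cv T 0 b = if b ∈ T then 1 else 0 := by
  unfold cv
  split_ifs with hb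
  · rw [Finset.card_eq_one]
    refine ⟨fun _ => b, ?_⟩
    ext f
    simp only [Finset.mem_filter, Finset.mem_univ, true_and, Finset.mem_singleton]
    constructor
    · rintro ⟨-, -, hl⟩
      funext j
      have hj := j.isLt
      have : j = Fin.last 0 := by ext; simp only [Fin.val_last]; omega
      rw [this, hl]
    · rintro rfl
      have hlt : ∀ i j : Fin 1, ¬ i < j := by decide
      exact ⟨fun i j hij => absurd hij (hlt i j), fun _ => hb, rfl⟩
  · rw [Finset.card_eq_zero]
    rw [Finset.filter_eq_empty_iff]
    rintro f - ⟨-, hT, hl⟩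
    exact hb (hl ▸ hT (Fin.last 0))

lemma cv_succ (T : Set S) (i : ℕ) (b : S) :
    cv T (i + 1) b = ∑ x : S, cv T i x * (if x ∈ T ∧ b ∈ T ∧ x < b then 1 else 0) := by
  unfold cv
  rw [Finset.card_eq_sum_card_fiberwise
    (f := fun f : Fin (i + 2) → S => f ((Fin.last i).castSucc)) (t := Finset.univ)
    (fun _ _ => Finset.mem_univ _)]
  refine Finset.sum_congr rfl fun x _ => ?_
  rw [Finset.filter_filter]
  by_cases hcond : x ∈ T ∧ b ∈ T ∧ x < b
  · rw [if_pos hcond, mul_one]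
    refine Finset.card_bij' (fun f _ => Fin.init f) (fun g _ => Fin.snoc g b) ?_ ?_ ?_ ?_
    · intro f hf
      simp only [Finset.mem_filter, Finset.mem_univ, true_and] at hf ⊢
      obtain ⟨⟨hsm, hT, hl⟩, hfib⟩ := hf
      refine ⟨fun p q hpq => hsm (by simpa using hpq), fun j => hT _, hfib⟩
    · intro g hg
      simp only [Finset.mem_filter, Finset.mem_univ, true_and] at hg ⊢
      obtain ⟨hsm, hT, hl⟩ := hg
      refine ⟨⟨?_, ?_, ?_⟩, ?_⟩
      · rw [Fin.strictMono_iff_lt_succ]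
        intro j
        induction j using Fin.lastCases with
        | last =>
          rw [Fin.succ_last, Fin.snoc_castSucc, Fin.snoc_last, hl]
          exact hcond.2.2
        | cast j' =>
          rw [Fin.succ_castSucc, Fin.snoc_castSucc, Fin.snoc_castSucc]
          exact hsm Fin.castSucc_lt_succ
      · intro j
        induction j using Fin.lastCases with
        | last => rw [Fin.snoc_last]; exact hcond.2.1
        | cast j' => rw [Fin.snoc_castSucc]; exact hT j'
      · rw [Fin.snoc_last]
      · rw [Fin.snoc_castSucc, hl]
    · intro f hf
      simp only [Finset.mem_filter, Finset.mem_univ, true_and] at hf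
      show Fin.snoc (Fin.init f) b = f
      have hb : b = f (Fin.last (i + 1)) := hf.1.2.2.symm
      subst hb
      exact Fin.snoc_init_self f
    · intro g hg
      funext j
      simp only [Fin.init, Fin.snoc_castSucc]
  · rw [if_neg hcond, mul_zero, Finset.card_eq_zero, Finset.filter_eq_empty_iff]
    rintro f - ⟨⟨hsm, hT, hl⟩, hfib⟩
    refine hcond ⟨hfib ▸ hT _, hl ▸ hT _, ?_⟩
    rw [← hfib, ← hl]
    exact hsm (Fin.castSucc_lt_last _)

lemma uT_etaT_pow (T : Set S) (i : ℕ) (b : S) :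
    (∑ a : S, uT T a * (etaT T ^ i) a b) = (cv T i b : ℚ) := by
  induction i generalizing b with
  | zero =>
    rw [cv_zero]
    simp only [pow_zero, Matrix.one_apply, mul_ite, mul_one, mul_zero]
    rw [Finset.sum_ite_eq' Finset.univ b (uT T)]
    simp [uT]
  | succ i ih =>
    rw [pow_succ]
    simp only [Matrix.mul_apply]
    calc (∑ a : S, uT T a * ∑ x : S, (etaT T ^ i) a x * etaT T x b)
        = ∑ a : S, ∑ x : S, uT T a * ((etaT T ^ i) a x * etaT T x b) := by
          refine Finset.sum_congr rfl fun a _ => by rw [Finset.mul_sum]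
      _ = ∑ x : S, ∑ a : S, uT T a * ((etaT T ^ i) a x * etaT T x b) := Finset.sum_comm
      _ = ∑ x : S, (∑ a : S, uT T a * (etaT T ^ i) a x) * etaT T x b := by
          refine Finset.sum_congr rfl fun x _ => ?_
          rw [Finset.sum_mul]
          refine Finset.sum_congr rfl fun a _ => by ring
      _ = ∑ x : S, (cv T i x : ℚ) * etaT T x b := by
          refine Finset.sum_congr rfl fun x _ => by rw [ih]
      _ = ((cv T (i + 1) b : ℕ) : ℚ) := by
          rw [cv_succ]
          push_cast
          refine Finset.sum_congr rfl fun x _ => ?_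
          simp [etaT]
  -- note: sum_comm usage may need fixing

lemma cv_eq_zero_of_not_mem (T : Set S) (i : ℕ) {b : S} (hb : b ∉ T) : cv T i b = 0 := by
  rw [cv, Finset.card_eq_zero, Finset.filter_eq_empty_iff]
  rintro f - ⟨-, hT, hl⟩
  exact hb (hl ▸ hT _)

lemma ccnt_eq_sum_cv (T : Set S) (i : ℕ) : ccnt T i = ∑ b : S, cv T i b := by
  unfold ccnt cv
  rw [Finset.card_eq_sum_card_fiberwise
    (f := fun f : Fin (i + 1) → S => f (Fin.last i)) (t := Finset.univ)
    (fun _ _ => Finset.mem_univ _)]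
  refine Finset.sum_congr rfl fun b _ => ?_
  rw [Finset.filter_filter]
  congr 1
  ext f
  simp only [Finset.mem_filter, Finset.mem_univ, true_and]
  tauto

lemma sum_uT_etaT_uT (T : Set S) (i : ℕ) :
    (∑ a : S, ∑ b : S, uT T a * (etaT T ^ i) a b * uT T b) = (ccnt T i : ℚ) := by
  rw [ccnt_eq_sum_cv]
  push_cast
  rw [Finset.sum_comm]
  refine Finset.sum_congr rfl fun b _ => ?_
  by_cases hb : b ∈ T
  · calc (∑ a : S, uT T a * (etaT T ^ i) a b * uT T b)
        = ∑ a : S, uT T a * (etaT T ^ i) a b := by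
          refine Finset.sum_congr rfl fun a _ => by simp [uT, hb]
      _ = _ := uT_etaT_pow T i b
  · rw [cv_eq_zero_of_not_mem T i hb]
    simp [uT, hb]

end MGNAux

namespace MGNAux
variable {S : Type*} [Fintype S] [PartialOrder S] [OrderTop S]

lemma eta_pow_succ_top (T : Set S) (htop : ∀ X ∈ T, X < ⊤)
    (hup : ∀ X ∈ T, ∀ Y : S, X ≤ Y → Y < ⊤ → Y ∈ T) :
    ∀ k : ℕ, ∀ a ∈ T, (eta S ^ (k + 1)) a (⊤ : S) = ∑ b : S, (etaT T ^ k) a b * uT T b := by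
  intro k
  induction k with
  | zero =>
    intro a ha
    simp only [pow_one, pow_zero, Matrix.one_apply, ite_mul, one_mul, zero_mul]
    rw [Finset.sum_ite_eq Finset.univ a (uT T)]
    simp [eta, uT, htop a ha, ha]
  | succ k ih =>
    intro a ha
    rw [pow_succ']
    rw [Matrix.mul_apply]
    have step : ∀ x : S, eta S a x * (eta S ^ (k + 1)) x ⊤
        = ∑ b : S, etaT T a x * ((etaT T ^ k) x b * uT T b) := by
      intro x
      by_cases hax : a < x
      · by_cases hx : x = ⊤
        · subst hx
          rw [eta_pow_top_apply (Nat.succ_le_succ (Nat.zero_le k)), mul_zero]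
          have : etaT T a ⊤ = 0 := by
            have : (⊤ : S) ∉ T := fun hc => lt_irrefl _ (htop _ hc)
            simp [etaT, this]
          simp [this]
        · have hxT : x ∈ T := hup a ha x hax.le (Ne.lt_top hx)
          have h1 : eta S a x = 1 := by simp [eta, hax]
          have h2 : etaT T a x = 1 := by simp [etaT, ha, hxT, hax]
          rw [h1, h2, one_mul, ih x hxT]
          simp only [one_mul]
      · have h1 : eta S a x = 0 := by simp [eta, hax]
        have h2 : etaT T a x = 0 := by simp [etaT, hax]
        simp [h1, h2]
    rw [Finset.sum_congr rfl (fun x _ => step x), Finset.sum_comm]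
    rw [pow_succ']
    refine Finset.sum_congr rfl fun b _ => ?_
    rw [Matrix.mul_apply, Finset.sum_mul]
    refine Finset.sum_congr rfl fun x _ => by ring

lemma sum_uT_mu_top (T : Set S) (htop : ∀ X ∈ T, X < ⊤)
    (hup : ∀ X ∈ T, ∀ Y : S, X ≤ Y → Y < ⊤ → Y ∈ T) :
    (∑ X : S, uT T X * mu S X ⊤) =
      ∑ i ∈ range (Fintype.card S), (-1 : ℚ) ^ (i + 1) * (ccnt T i : ℚ) := by
  have htopT : (⊤ : S) ∉ T := fun hc => lt_irrefl _ (htop _ hc)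
  unfold mu
  calc (∑ X : S, uT T X * (∑ i ∈ range (Fintype.card S + 1), (-(eta S)) ^ i) X ⊤)
      = ∑ i ∈ range (Fintype.card S + 1), ∑ X : S, uT T X * ((-(eta S)) ^ i) X ⊤ := by
        rw [Finset.sum_comm]
        refine Finset.sum_congr rfl fun X _ => ?_
        rw [Matrix.sum_apply, Finset.mul_sum]
    _ = ∑ i ∈ range (Fintype.card S), ∑ X : S, uT T X * ((-(eta S)) ^ (i + 1)) X ⊤
          + ∑ X : S, uT T X * ((-(eta S)) ^ 0) X ⊤ := Finset.sum_range_succ' _ _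
    _ = ∑ i ∈ range (Fintype.card S), (-1 : ℚ) ^ (i + 1) * (ccnt T i : ℚ) := by
        have hz : (∑ X : S, uT T X * ((-(eta S)) ^ 0) X ⊤) = 0 := by
          simp only [pow_zero, Matrix.one_apply, mul_ite, mul_one, mul_zero]
          rw [Finset.sum_ite_eq' Finset.univ (⊤ : S) (uT T)]
          simp [uT, htopT]
        rw [hz, add_zero]
        refine Finset.sum_congr rfl fun i _ => ?_
        calc (∑ X : S, uT T X * ((-(eta S)) ^ (i + 1)) X ⊤)
            = ∑ X : S, (-1 : ℚ) ^ (i + 1) * (uT T X * (eta S ^ (i + 1)) X ⊤) := by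
              refine Finset.sum_congr rfl fun X _ => ?_
              rw [neg_eta_pow, Matrix.smul_apply, smul_eq_mul]
              ring
          _ = (-1 : ℚ) ^ (i + 1) * ∑ X : S, uT T X * (eta S ^ (i + 1)) X ⊤ := by
              rw [Finset.mul_sum]
          _ = (-1 : ℚ) ^ (i + 1) * (ccnt T i : ℚ) := by
              congr 1
              calc (∑ X : S, uT T X * (eta S ^ (i + 1)) X ⊤)
                  = ∑ X : S, ∑ b : S, uT T X * (etaT T ^ i) X b * uT T b := by
                    refine Finset.sum_congr rfl fun X _ => ?_
                    by_cases hX : X ∈ T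
                    · rw [eta_pow_succ_top T htop hup i X hX, Finset.mul_sum]
                      refine Finset.sum_congr rfl fun b _ => by ring
                    · simp [uT, hX]
                _ = (ccnt T i : ℚ) := sum_uT_etaT_uT T i

end MGNAux
namespace MGNAux

lemma isCyclic_zpowers {G : Type*} [Group G] (g : G) : IsCyclic ↥(Subgroup.zpowers g) := by
  refine ⟨⟨g, Subgroup.mem_zpowers g⟩, ?_⟩
  rintro ⟨x, hx⟩
  obtain ⟨k, hk⟩ := Subgroup.mem_zpowers_iff.1 hx
  refine ⟨k, ?_⟩
  ext
  simpa using hk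

lemma ccnt_eq_zero {S : Type*} [Fintype S] [PartialOrder S] (T : Set S) {i : ℕ}
    (hi : Fintype.card S ≤ i) : ccnt T i = 0 := by
  rw [ccnt, Finset.card_eq_zero, Finset.filter_eq_empty_iff]
  rintro f - ⟨hsm, -⟩
  have := Fintype.card_le_of_injective f hsm.injective
  simp only [Fintype.card_fin] at this
  omega

end MGNAux

section Bridge

variable (G : Type*) [Group G] [Finite G]

lemma chainCount_eq_ccnt (T : Set (Subgroup G)) (i : ℕ) :
    chainCount G T i = MGNAux.ccnt T i := by
  rw [chainCount, MGNAux.ccnt, Nat.card_eq_fintype_card, Fintype.card_subtype]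

lemma eulerChar_eq_range (T : Set (Subgroup G)) :
    eulerChar G T = ∑ i ∈ Finset.range (Fintype.card (Subgroup G)),
      (-1 : ℚ) ^ i * (MGNAux.ccnt T i : ℚ) := by
  rw [eulerChar]
  rw [finsum_eq_sum_of_support_subset _ (s := Finset.range (Fintype.card (Subgroup G))) ?_]
  · exact Finset.sum_congr rfl fun i _ => by rw [chainCount_eq_ccnt]
  · intro i hi
    simp only [Function.mem_support, ne_eq] at hi
    simp only [Finset.coe_range, Set.mem_Iio]
    by_contra hc
    push_neg at hc
    rw [chainCount_eq_ccnt, MGNAux.ccnt_eq_zero T hc] at hi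
    simp at hi

end Bridge

/-- Let `G` be a finite non-cyclic group and `N ⊴ G` with `|G : N| = p` prime. If for every
cyclic subgroup `C` of `N` the order complex of `T_C(G,N) = {X | C ≤ X < G, X ≰ N}` has
Euler characteristic `1`, then `m_{G,N} = 0`. -/
theorem mGN_eq_zero_of_eulerChar_eq_one (G : Type*) [Group G] [Finite G]
    (hG : ¬ IsCyclic G) (N : Subgroup G) [N.Normal]
    (p : ℕ) (hp : p.Prime) (hidx : N.index = p)
    (h : ∀ C : Subgroup G, C ≤ N → IsCyclic ↥C →
      eulerChar G {X : Subgroup G | C ≤ X ∧ X < ⊤ ∧ ¬ X ≤ N} = 1) :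
    mGN G N = 0 := by
  haveI : Fintype G := Fintype.ofFinite G
  have hmu : subgroupMu G = MGNAux.mu (Subgroup G) := MGNAux.mu_eq
  have hNtop : ¬ (⊤ : Subgroup G) ≤ N := by
    intro hle
    rw [top_le_iff.1 hle, Subgroup.index_top] at hidx
    exact hp.ne_one hidx.symm
  -- the product condition is equivalent to X ≰ N
  have hcond : ∀ X : Subgroup G, ((X : Set G) * (N : Set G) = Set.univ) ↔ ¬ X ≤ N := by
    intro X
    rw [← Subgroup.mul_normal X N, Subgroup.coe_eq_univ]
    constructor
    · intro hXN hle
      rw [sup_of_le_right hle] at hXN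
      rw [hXN, Subgroup.index_top] at hidx
      exact hp.ne_one hidx.symm
    · intro hXN
      have hle : N ≤ X ⊔ N := le_sup_right
      have hdvd : (X ⊔ N).index ∣ N.index := Subgroup.index_dvd_of_le hle
      rw [hidx] at hdvd
      rcases hp.eq_one_or_self_of_dvd _ hdvd with h1 | hp'
      · exact Subgroup.index_eq_one.1 h1
      · exfalso
        have hmul := Subgroup.relIndex_mul_index hle
        rw [hp', hidx] at hmul
        have hrel : N.relIndex (X ⊔ N) = 1 :=
          Nat.eq_of_mul_eq_mul_right hp.pos (hmul.trans (one_mul p).symm)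
        exact hXN (le_trans le_sup_left (Subgroup.relIndex_eq_one.1 hrel))
  -- entry of zeta * mu = 1
  have hA : ∀ K : Subgroup G,
      (∑ X : Subgroup G, (if K ≤ X then (1 : ℚ) else 0) * MGNAux.mu (Subgroup G) X ⊤)
        = if K = ⊤ then 1 else 0 := by
    intro K
    have h1 : (MGNAux.zeta (Subgroup G) * MGNAux.mu (Subgroup G)) K ⊤
        = (1 : Matrix (Subgroup G) (Subgroup G) ℚ) K ⊤ := by rw [MGNAux.zeta_mul_mu]
    rw [Matrix.mul_apply, Matrix.one_apply] at h1
    simpa [MGNAux.zeta] using h1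
  have hcard : ∀ X : Subgroup G, (Nat.card X : ℚ) = ∑ g : G, if g ∈ X then (1 : ℚ) else 0 := by
    intro X
    have h1 : Nat.card X = (Finset.univ.filter (fun g : G => g ∈ X)).card := by
      rw [Nat.card_eq_fintype_card, Fintype.card_subtype]
    rw [h1, Finset.card_filter]
    push_cast
    exact Finset.sum_congr rfl fun g _ => by split_ifs <;> norm_num
  have hzero : (∑ X : Subgroup G,
      if (X : Set G) * (N : Set G) = (Set.univ : Set G)
      then (Nat.card X : ℚ) * subgroupMu G X ⊤ else 0) = 0 := by
    calc (∑ X : Subgroup G,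
        if (X : Set G) * (N : Set G) = (Set.univ : Set G)
        then (Nat.card X : ℚ) * subgroupMu G X ⊤ else 0)
        = ∑ X : Subgroup G, ∑ g : G,
            (if (¬ X ≤ N ∧ g ∈ X) then MGNAux.mu (Subgroup G) X ⊤ else 0) := by
          refine Finset.sum_congr rfl fun X _ => ?_
          rw [if_congr (hcond X) rfl rfl, hmu]
          by_cases hX : ¬ X ≤ N
          · rw [if_pos hX, hcard X, Finset.sum_mul]
            refine Finset.sum_congr rfl fun g _ => ?_
            by_cases hg : g ∈ X <;> simp [hX, hg]
          · rw [if_neg hX]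
            exact (Finset.sum_eq_zero fun g _ => by simp [hX]).symm
      _ = ∑ g : G, ∑ X : Subgroup G,
            (if (¬ X ≤ N ∧ g ∈ X) then MGNAux.mu (Subgroup G) X ⊤ else 0) := Finset.sum_comm
      _ = 0 := by
          refine Finset.sum_eq_zero fun g _ => ?_
          by_cases hgN : g ∈ N
          · -- g ∈ N : use the Euler characteristic hypothesis
            set C := Subgroup.zpowers g with hC
            set Tset : Set (Subgroup G) := {X : Subgroup G | C ≤ X ∧ X < ⊤ ∧ ¬ X ≤ N} with hTset
            have htop : ∀ X ∈ Tset, X < ⊤ := fun X hX => hX.2.1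
            have hup : ∀ X ∈ Tset, ∀ Y : Subgroup G, X ≤ Y → Y < ⊤ → Y ∈ Tset :=
              fun X hX Y hXY hY => ⟨hX.1.trans hXY, hY, fun hYN => hX.2.2 (hXY.trans hYN)⟩
            have hE : eulerChar G Tset = 1 :=
              h C (Subgroup.zpowers_le.2 hgN) (MGNAux.isCyclic_zpowers g)
            have hB : (∑ X : Subgroup G, MGNAux.uT Tset X * MGNAux.mu (Subgroup G) X ⊤) = -1 := by
              rw [MGNAux.sum_uT_mu_top Tset htop hup]
              have : ∀ i ∈ Finset.range (Fintype.card (Subgroup G)),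
                  (-1 : ℚ) ^ (i + 1) * (MGNAux.ccnt Tset i : ℚ)
                    = -((-1 : ℚ) ^ i * (MGNAux.ccnt Tset i : ℚ)) := by
                intro i _; ring
              rw [Finset.sum_congr rfl this, Finset.sum_neg_distrib,
                ← eulerChar_eq_range G Tset, hE]
            have hT0 : MGNAux.uT Tset (⊤ : Subgroup G) = 0 := by
              have : (⊤ : Subgroup G) ∉ Tset := fun hc => lt_irrefl _ (htop _ hc)
              simp [MGNAux.uT, this]
            rw [Finset.sum_eq_sum_sdiff_singleton_add (Finset.mem_univ (⊤ : Subgroup G))]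
            have hfTop : (if (¬ (⊤ : Subgroup G) ≤ N ∧ g ∈ (⊤ : Subgroup G))
                then MGNAux.mu (Subgroup G) (⊤ : Subgroup G) ⊤ else 0) = 1 := by
              rw [if_pos ⟨hNtop, Subgroup.mem_top g⟩, MGNAux.mu_top_top]
            rw [hfTop]
            have hrest : (∑ X ∈ Finset.univ \ {(⊤ : Subgroup G)},
                (if (¬ X ≤ N ∧ g ∈ X) then MGNAux.mu (Subgroup G) X ⊤ else 0)) = -1 := by
              have heq : ∀ X ∈ Finset.univ \ {(⊤ : Subgroup G)},
                  (if (¬ X ≤ N ∧ g ∈ X) then MGNAux.mu (Subgroup G) X ⊤ else 0)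
                    = MGNAux.uT Tset X * MGNAux.mu (Subgroup G) X ⊤ := by
                intro X hX
                have hXne : X ≠ ⊤ := by
                  simpa using (Finset.mem_sdiff.1 hX).2
                by_cases hXc : ¬ X ≤ N ∧ g ∈ X
                · have hXT : X ∈ Tset :=
                    ⟨Subgroup.zpowers_le.2 hXc.2, lt_top_iff_ne_top.2 hXne, hXc.1⟩
                  rw [if_pos hXc]
                  simp [MGNAux.uT, hXT]
                · have hXT : X ∉ Tset := fun hc =>
                    hXc ⟨hc.2.2, Subgroup.zpowers_le.1 hc.1⟩
                  rw [if_neg hXc]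
                  simp [MGNAux.uT, hXT]
              rw [Finset.sum_congr rfl heq]
              have := Finset.sum_eq_sum_sdiff_singleton_add (Finset.mem_univ (⊤ : Subgroup G))
                (fun X => MGNAux.uT Tset X * MGNAux.mu (Subgroup G) X ⊤)
              rw [hB, hT0, zero_mul, add_zero] at this
              exact this.symm
            rw [hrest]
            ring
          · -- g ∉ N : Möbius sum over the interval [⟨g⟩, ⊤]
            have heq : ∀ X : Subgroup G,
                (if (¬ X ≤ N ∧ g ∈ X) then MGNAux.mu (Subgroup G) X ⊤ else 0)
                  = (if Subgroup.zpowers g ≤ X then (1 : ℚ) else 0)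
                      * MGNAux.mu (Subgroup G) X ⊤ := by
              intro X
              by_cases hg : g ∈ X
              · have h1 : ¬ X ≤ N := fun hle => hgN (hle hg)
                rw [if_pos ⟨h1, hg⟩, if_pos (Subgroup.zpowers_le.2 hg), one_mul]
              · rw [if_neg (fun hc => hg hc.2), if_neg (fun hc => hg (Subgroup.zpowers_le.1 hc)),
                  zero_mul]
            rw [Finset.sum_congr rfl (fun X _ => heq X), hA]
            have hne : Subgroup.zpowers g ≠ ⊤ := by
              intro hc
              exact hG ⟨⟨g, fun x => by
                have : x ∈ Subgroup.zpowers g := hc ▸ Subgroup.mem_top x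
                exact Subgroup.mem_zpowers_iff.1 this⟩⟩
            rw [if_neg hne]
  rw [mGN, hzero, mul_zero]
end

section
/- Let G be a finite non-cyclic group and N a normal subgroup of G. Let {H_1, ..., H_n} be the set of all maximal subgroups of G containing N, let J = {1, ..., n}, and for a nonempty subset σ ⊆ J set H_σ = ∩_{j∈σ} H_j. Then m_{G,N} = (1/|G|) · Σ_{C ≤ G, C cyclic} Σ_{i=1}^{n} Σ_{σ ⊆ J, |σ| = i, C ≤ H_σ} (-1)^i · χ̃(T_C(G, H_σ)) · φ(|C|), where the outer sum runs over all cyclic subgroups C of G and φ is the Euler totient function. -/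
open scoped Classical Pointwise

section MatrixPart
variable (G : Type*) [Group G] [Finite G]

lemma exists_linear_sort :
    ∃ σ : Fin (Fintype.card (Subgroup G)) ≃ Subgroup G, ∀ i j, σ i ≤ σ j → i ≤ j := by
  classical
  haveI : Finite (LinearExtension (Subgroup G)) := inferInstanceAs (Finite (Subgroup G))
  haveI instF : Fintype (LinearExtension (Subgroup G)) := Fintype.ofFinite _
  have hcard : Fintype.card (LinearExtension (Subgroup G)) = Fintype.card (Subgroup G) :=
    Fintype.card_congr ⟨id, id, fun _ => rfl, fun _ => rfl⟩
  let e := monoEquivOfFin (LinearExtension (Subgroup G)) rfl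
  refine ⟨(finCongr hcard.symm).trans (e.toEquiv.trans ⟨id, id, fun _ => rfl, fun _ => rfl⟩),
    fun i j h => ?_⟩
  have h2 := (toLinearExtension (α := Subgroup G)).monotone h
  have h3 := e.le_iff_le.mp (show e (finCongr hcard.symm i) ≤ e (finCongr hcard.symm j) from h2)
  simpa using h3

lemma zeta_det_eq_one :
    (Matrix.of fun K D : Subgroup G => if K ≤ D then (1 : ℚ) else 0).det = 1 := by
  classical
  set Z := Matrix.of fun K D : Subgroup G => if K ≤ D then (1 : ℚ) else 0 with hZ
  obtain ⟨σ, hσ⟩ := exists_linear_sort G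
  have key : (Z.submatrix σ σ).BlockTriangular id := by
    intro i j hij
    simp only [Matrix.submatrix_apply, hZ, Matrix.of_apply]
    rw [if_neg]
    intro hle
    exact absurd (hσ _ _ hle) (not_le.mpr hij)
  rw [← Matrix.det_submatrix_equiv_self σ Z, Matrix.det_of_upperTriangular key]
  apply Finset.prod_eq_one
  intro i _
  simp [hZ]

lemma zeta_mul_mu :
    (Matrix.of fun K D : Subgroup G => if K ≤ D then (1 : ℚ) else 0) * subgroupMu G = 1 :=
  Matrix.mul_nonsing_inv _ (by rw [zeta_det_eq_one]; exact isUnit_one)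

lemma sum_mu (C : Subgroup G) :
    ∑ X : Subgroup G, (if C ≤ X then subgroupMu G X ⊤ else 0) =
      if C = ⊤ then 1 else 0 := by
  have h := congrFun (congrFun (zeta_mul_mu G) C) ⊤
  rw [Matrix.mul_apply, Matrix.one_apply] at h
  simpa [ite_mul, one_mul, zero_mul] using h

lemma mu_top_top : subgroupMu G ⊤ ⊤ = 1 := by
  have h := sum_mu G ⊤
  rw [if_pos rfl] at h
  rw [← h, Finset.sum_eq_single (⊤ : Subgroup G)]
  · simp
  · intro b _ hb
    rw [if_neg]
    intro hle
    exact hb (top_le_iff.mp hle)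
  · intro h'; exact absurd (Finset.mem_univ _) h'

end MatrixPart

section Chains
variable {G : Type*} [Group G] [Finite G]

/-- Chains of `i+1` elements of `T` starting at `X`, as a `Finset`. -/
noncomputable def dC (T : Set (Subgroup G)) (i : ℕ) (X : Subgroup G) :
    Finset (Fin (i + 1) → Subgroup G) :=
  Finset.univ.filter (fun f => (StrictMono f ∧ ∀ j, f j ∈ T) ∧ f 0 = X)

lemma chainCount_eq (T : Set (Subgroup G)) (i : ℕ) :
    (chainCount G T i : ℚ) = ∑ X : Subgroup G, ((dC T i X).card : ℚ) := by
  rw [chainCount, Nat.card_eq_fintype_card, Fintype.card_subtype,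
    Finset.card_eq_sum_card_fiberwise (f := fun f => f 0) (t := Finset.univ)
      (fun _ _ => Finset.mem_univ _)]
  push_cast
  apply Finset.sum_congr rfl
  intro X _
  congr 1
  rw [Finset.filter_filter, dC]

lemma dC_card_of_not_mem {T : Set (Subgroup G)} {X : Subgroup G} (hX : X ∉ T) (i : ℕ) :
    (dC T i X).card = 0 := by
  rw [Finset.card_eq_zero, dC, Finset.filter_eq_empty_iff]
  rintro f - ⟨⟨-, hT⟩, h0⟩
  exact hX (h0 ▸ hT 0)

lemma dC_card_of_ge {T : Set (Subgroup G)} {X : Subgroup G} {i : ℕ}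
    (h : Fintype.card (Subgroup G) ≤ i) : (dC T i X).card = 0 := by
  rw [Finset.card_eq_zero, dC, Finset.filter_eq_empty_iff]
  rintro f - ⟨⟨hSM, -⟩, -⟩
  have := Fintype.card_le_of_injective f hSM.injective
  rw [Fintype.card_fin] at this
  omega

lemma chainCount_of_ge {T : Set (Subgroup G)} {i : ℕ}
    (h : Fintype.card (Subgroup G) ≤ i) : chainCount G T i = 0 := by
  rw [chainCount]
  have : IsEmpty {f : Fin (i + 1) → Subgroup G // StrictMono f ∧ ∀ j, f j ∈ T} := by
    constructor
    rintro ⟨f, hSM, -⟩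
    have := Fintype.card_le_of_injective f hSM.injective
    rw [Fintype.card_fin] at this
    omega
  exact Nat.card_of_isEmpty

lemma dC_card_zero_of_mem {T : Set (Subgroup G)} {X : Subgroup G} (hX : X ∈ T) :
    (dC T 0 X).card = 1 := by
  haveI : Subsingleton (Fin (0 + 1)) := ⟨fun a b => Fin.ext (by omega)⟩
  rw [Finset.card_eq_one]
  refine ⟨fun _ => X, ?_⟩
  ext f
  simp only [dC, Finset.mem_filter, Finset.mem_univ, true_and, Finset.mem_singleton]
  constructor
  · rintro ⟨⟨-, -⟩, h0⟩
    funext j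
    rw [Subsingleton.elim j 0, h0]
  · rintro rfl
    exact ⟨⟨Subsingleton.strictMono _, fun _ => hX⟩, rfl⟩

lemma strictMono_cons {p : ℕ} (g : Fin (p + 1) → Subgroup G) (X : Subgroup G)
    (hX : X < g 0) (hg : StrictMono g) :
    StrictMono (Fin.cons X g : Fin (p + 2) → Subgroup G) := by
  rw [Fin.strictMono_iff_lt_succ]
  intro i
  refine Fin.cases ?_ (fun j => ?_) i
  · simpa using hX
  · rw [← Fin.succ_castSucc]
    simp only [Fin.cons_succ]
    exact hg Fin.castSucc_lt_succ

lemma dC_card_succ {T : Set (Subgroup G)} {X : Subgroup G} (hX : X ∈ T) (i : ℕ) :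
    (dC T (i + 1) X).card =
      ∑ Y : Subgroup G, (if X < Y then (dC T i Y).card else 0) := by
  have hbij : (dC T (i + 1) X).card =
      (Finset.univ.sigma (fun Y : Subgroup G => if X < Y then dC T i Y else ∅)).card := by
    refine Finset.card_bij' (fun f _ => (⟨Fin.tail f 0, Fin.tail f⟩ :
        (_ : Subgroup G) × (Fin (i + 1) → Subgroup G))) (fun p _ => Fin.cons X p.2)
        ?_ ?_ ?_ ?_
    · intro f hf
      rw [dC, Finset.mem_filter] at hf
      obtain ⟨-, ⟨hSM, hT⟩, h0⟩ := hf
      rw [Finset.mem_sigma]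
      refine ⟨Finset.mem_univ _, ?_⟩
      have hlt : X < Fin.tail f 0 := by
        rw [← h0]
        exact hSM (Fin.succ_pos 0)
      rw [if_pos hlt, dC, Finset.mem_filter]
      exact ⟨Finset.mem_univ _, ⟨hSM.comp Fin.strictMono_succ, fun j => hT j.succ⟩, rfl⟩
    · rintro ⟨Y, g⟩ hp
      rw [Finset.mem_sigma] at hp
      obtain ⟨-, hg⟩ := hp
      dsimp only at hg ⊢
      by_cases hXY : X < Y
      · rw [if_pos hXY, dC, Finset.mem_filter] at hg
        obtain ⟨-, ⟨hSM, hT⟩, h0⟩ := hg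
        rw [dC, Finset.mem_filter]
        refine ⟨Finset.mem_univ _, ⟨strictMono_cons g X (h0 ▸ hXY) hSM, ?_⟩,
          Fin.cons_zero _ _⟩
        intro j
        refine Fin.cases ?_ (fun j' => ?_) j
        · simpa using hX
        · simpa using hT j'
      · rw [if_neg hXY] at hg
        exact absurd hg (Finset.notMem_empty _)
    · intro f hf
      rw [dC, Finset.mem_filter] at hf
      obtain ⟨-, -, h0⟩ := hf
      dsimp only
      rw [← h0]
      exact Fin.cons_self_tail f
    · rintro ⟨Y, g⟩ hp
      rw [Finset.mem_sigma] at hp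
      obtain ⟨-, hg⟩ := hp
      dsimp only at hg ⊢
      by_cases hXY : X < Y
      · rw [if_pos hXY, dC, Finset.mem_filter] at hg
        obtain ⟨-, -, h0⟩ := hg
        subst h0
        simp [Fin.tail_cons]
      · rw [if_neg hXY] at hg
        exact absurd hg (Finset.notMem_empty _)
  rw [hbij, Finset.card_sigma]
  apply Finset.sum_congr rfl
  intro Y _
  split <;> simp

/-- Alternating sum of chain counts starting at `X`. -/
noncomputable def sT (T : Set (Subgroup G)) (X : Subgroup G) : ℚ :=
  ∑ i ∈ Finset.range (Fintype.card (Subgroup G) + 1), (-1 : ℚ) ^ i * ((dC T i X).card : ℚ)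

lemma sT_of_not_mem {T : Set (Subgroup G)} {X : Subgroup G} (hX : X ∉ T) : sT T X = 0 := by
  rw [sT]
  apply Finset.sum_eq_zero
  intro i _
  rw [dC_card_of_not_mem hX]
  norm_num

lemma eulerChar_eq_sum_sT (T : Set (Subgroup G)) :
    eulerChar G T = ∑ X : Subgroup G, sT T X := by
  rw [eulerChar, finsum_eq_sum_of_support_subset _
    (s := Finset.range (Fintype.card (Subgroup G) + 1)) ?_]
  · simp_rw [chainCount_eq, Finset.mul_sum, sT]
    rw [Finset.sum_comm]
  · intro i hi
    simp only [Function.mem_support, ne_eq] at hi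
    by_contra h
    apply hi
    rw [chainCount_of_ge]
    · norm_num
    · simp only [Finset.coe_range, Set.mem_Iio] at h
      omega

lemma sT_rec {T : Set (Subgroup G)} {X : Subgroup G} (hX : X ∈ T) :
    sT T X = 1 - ∑ Y : Subgroup G, (if X < Y then sT T Y else 0) := by
  have hsT' : ∀ Y : Subgroup G, sT T Y =
      ∑ i ∈ Finset.range (Fintype.card (Subgroup G)), (-1 : ℚ) ^ i * ((dC T i Y).card : ℚ) := by
    intro Y
    rw [sT, Finset.sum_range_succ, dC_card_of_ge le_rfl]
    norm_num
  rw [sT, Finset.sum_range_succ']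
  simp only [pow_zero, one_mul, dC_card_zero_of_mem hX, Nat.cast_one]
  have hterm : ∀ i, (-1 : ℚ) ^ (i + 1) * ((dC T (i + 1) X).card : ℚ) =
      -∑ Y : Subgroup G, (if X < Y then (-1 : ℚ) ^ i * ((dC T i Y).card : ℚ) else 0) := by
    intro i
    rw [dC_card_succ hX i, pow_succ]
    push_cast
    rw [Finset.mul_sum]
    rw [← Finset.sum_neg_distrib]
    apply Finset.sum_congr rfl
    intro Y _
    split <;> ring
  rw [Finset.sum_congr rfl (fun i _ => hterm i), Finset.sum_neg_distrib, Finset.sum_comm]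
  have : ∀ Y : Subgroup G,
      ∑ i ∈ Finset.range (Fintype.card (Subgroup G)),
        (if X < Y then (-1 : ℚ) ^ i * ((dC T i Y).card : ℚ) else 0) =
      (if X < Y then sT T Y else 0) := by
    intro Y
    by_cases h : X < Y
    · simp only [if_pos h, hsT' Y]
    · simp [h]
  rw [Finset.sum_congr rfl (fun Y _ => this Y)]
  ring

end Chains
section Bridge
variable {G : Type*} [Group G] [Finite G]

lemma sT_eq_neg_mu (T : Set (Subgroup G)) (hT1 : ∀ X ∈ T, X < ⊤)
    (hT2 : ∀ X ∈ T, ∀ Y : Subgroup G, X ≤ Y → Y < ⊤ → Y ∈ T) :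
    ∀ X ∈ T, sT T X = -(subgroupMu G X ⊤) := by
  have wf := (Finite.to_wellFoundedGT (α := Subgroup G)).wf
  intro X
  induction X using WellFounded.induction wf with
  | _ Z IH =>
  intro hZ
  have h1 : ∑ Y : Subgroup G, (if Z ≤ Y then subgroupMu G Y ⊤ else 0) = 0 := by
    rw [sum_mu, if_neg (hT1 Z hZ).ne]
  have hsplit : ∀ Y : Subgroup G, (if Z ≤ Y then subgroupMu G Y ⊤ else 0) =
      (if Y = Z then subgroupMu G Y ⊤ else 0) + (if Z < Y then subgroupMu G Y ⊤ else 0) := by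
    intro Y
    by_cases h : Y = Z
    · subst h; simp [lt_irrefl]
    · by_cases h2 : Z ≤ Y
      · rw [if_pos h2, if_neg h, if_pos (lt_of_le_of_ne h2 (Ne.symm h)), zero_add]
      · rw [if_neg h2, if_neg h, if_neg (fun hlt => h2 hlt.le), zero_add]
  rw [Finset.sum_congr rfl (fun Y _ => hsplit Y), Finset.sum_add_distrib] at h1
  rw [Finset.sum_ite_eq' Finset.univ Z (fun Y => subgroupMu G Y ⊤)] at h1
  rw [if_pos (Finset.mem_univ _)] at h1
  -- h1 : μ Z ⊤ + ∑ Y, (if Z < Y then μ Y ⊤ else 0) = 0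
  have htopT : (⊤ : Subgroup G) ∉ T := fun h => absurd (hT1 _ h) (lt_irrefl _)
  have hsplit2 : ∀ Y : Subgroup G, (if Z < Y then subgroupMu G Y ⊤ else 0) =
      (if Y = ⊤ then (if Z < Y then subgroupMu G Y ⊤ else 0) else 0) +
      (if Z < Y then (if Y ∈ T then subgroupMu G Y ⊤ else 0) else 0) := by
    intro Y
    by_cases h : Y = ⊤
    · subst h
      rw [if_pos rfl, if_pos (hT1 Z hZ), if_pos (hT1 Z hZ), if_neg htopT, add_zero]
    · rw [if_neg h, zero_add]
      by_cases hZY : Z < Y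
      · rw [if_pos hZY, if_pos hZY, if_pos (hT2 Z hZ Y hZY.le (lt_top_iff_ne_top.mpr h))]
      · rw [if_neg hZY, if_neg hZY]
  rw [Finset.sum_congr rfl (fun Y _ => hsplit2 Y), Finset.sum_add_distrib] at h1
  rw [Finset.sum_ite_eq' Finset.univ (⊤ : Subgroup G)
    (fun Y => if Z < Y then subgroupMu G Y ⊤ else 0)] at h1
  rw [if_pos (Finset.mem_univ _), if_pos (hT1 Z hZ), mu_top_top] at h1
  -- h1 : μ Z ⊤ + (1 + ∑ Y, (if Z < Y then (if Y ∈ T then μ Y ⊤ else 0) else 0)) = 0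
  rw [sT_rec hZ]
  have hterm : ∀ Y : Subgroup G, (if Z < Y then sT T Y else 0) =
      -(if Z < Y then (if Y ∈ T then subgroupMu G Y ⊤ else 0) else 0) := by
    intro Y
    by_cases hZY : Z < Y
    · rw [if_pos hZY, if_pos hZY]
      by_cases hYT : Y ∈ T
      · rw [if_pos hYT, IH Y hZY hYT]
      · rw [if_neg hYT, sT_of_not_mem hYT, neg_zero]
    · rw [if_neg hZY, if_neg hZY, neg_zero]
  rw [Finset.sum_congr rfl (fun Y _ => hterm Y), Finset.sum_neg_distrib]
  linarith [h1]

lemma key_identity (C K : Subgroup G) (hCK : C ≤ K) (hK : K < ⊤) :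
    ∑ X : Subgroup G, (if C ≤ X ∧ X ≤ K then subgroupMu G X ⊤ else 0)
      = reducedEulerChar G {X : Subgroup G | C ≤ X ∧ X < ⊤ ∧ ¬ X ≤ K} := by
  set T : Set (Subgroup G) := {X : Subgroup G | C ≤ X ∧ X < ⊤ ∧ ¬ X ≤ K} with hT
  have hT1 : ∀ X ∈ T, X < ⊤ := fun X hX => hX.2.1
  have hT2 : ∀ X ∈ T, ∀ Y : Subgroup G, X ≤ Y → Y < ⊤ → Y ∈ T := by
    rintro X ⟨hCX, -, hXK⟩ Y hXY hY
    exact ⟨hCX.trans hXY, hY, fun h => hXK (hXY.trans h)⟩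
  have hmu := sT_eq_neg_mu T hT1 hT2
  have hchi : eulerChar G T = ∑ X : Subgroup G,
      (if X ∈ T then -(subgroupMu G X ⊤) else 0) := by
    rw [eulerChar_eq_sum_sT]
    apply Finset.sum_congr rfl
    intro X _
    by_cases hX : X ∈ T
    · rw [if_pos hX, hmu X hX]
    · rw [if_neg hX, sT_of_not_mem hX]
  have hCtop : C ≠ ⊤ := fun h => absurd (h ▸ hCK) (by simpa using hK.ne)
  have h0 : ∑ X : Subgroup G, (if C ≤ X then subgroupMu G X ⊤ else 0) = 0 := by
    rw [sum_mu, if_neg hCtop]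
  have htopT : (⊤ : Subgroup G) ∉ T := fun h => absurd (hT1 _ h) (lt_irrefl _)
  have hsplit : ∀ X : Subgroup G, (if C ≤ X then subgroupMu G X ⊤ else 0) =
      (if C ≤ X ∧ X ≤ K then subgroupMu G X ⊤ else 0) +
      ((if X = ⊤ then subgroupMu G X ⊤ else 0) +
       (if X ∈ T then subgroupMu G X ⊤ else 0)) := by
    intro X
    by_cases hX : X = ⊤
    · subst hX
      rw [if_pos le_top, if_pos rfl, if_neg htopT, if_neg (fun h : C ≤ ⊤ ∧ ⊤ ≤ K =>
        absurd (top_le_iff.mp h.2) hK.ne), add_zero, zero_add]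
    · by_cases hCX : C ≤ X
      · by_cases hXK : X ≤ K
        · rw [if_pos hCX, if_pos ⟨hCX, hXK⟩, if_neg hX,
            if_neg (fun h : X ∈ T => h.2.2 hXK)]
          ring
        · rw [if_pos hCX, if_neg (fun h : C ≤ X ∧ X ≤ K => hXK h.2), if_neg hX,
            if_pos (show X ∈ T from ⟨hCX, lt_top_iff_ne_top.mpr hX, hXK⟩)]
          ring
      · rw [if_neg hCX, if_neg (fun h : C ≤ X ∧ X ≤ K => hCX h.1), if_neg hX,
          if_neg (fun h : X ∈ T => hCX h.1)]
        ring
  rw [Finset.sum_congr rfl (fun X _ => hsplit X), Finset.sum_add_distrib,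
    Finset.sum_add_distrib,
    Finset.sum_ite_eq' Finset.univ (⊤ : Subgroup G) (fun X => subgroupMu G X ⊤),
    if_pos (Finset.mem_univ _), mu_top_top] at h0
  have hTsum : ∑ X : Subgroup G, (if X ∈ T then subgroupMu G X ⊤ else 0)
      = -(eulerChar G T) := by
    rw [hchi, ← Finset.sum_neg_distrib]
    apply Finset.sum_congr rfl
    intro X _
    by_cases hX : X ∈ T <;> simp [hX]
  rw [hTsum] at h0
  rw [reducedEulerChar]
  linarith [h0]

end Bridge
section Totient
variable {G : Type*} [Group G] [Finite G]

lemma isCyclic_zpowers (g : G) : IsCyclic (Subgroup.zpowers g) := by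
  refine ⟨⟨⟨g, Subgroup.mem_zpowers g⟩, ?_⟩⟩
  rintro ⟨x, hx⟩
  obtain ⟨k, hk⟩ := Subgroup.mem_zpowers_iff.mp hx
  refine Subgroup.mem_zpowers_iff.mpr ⟨k, ?_⟩
  ext
  simpa using hk

lemma card_generators (C : Subgroup G) (hC : IsCyclic C) [Fintype G] :
    (Finset.univ.filter (fun g : G => Subgroup.zpowers g = C)).card =
      Nat.totient (Nat.card C) := by
  haveI : Fintype (↥C) := Fintype.ofFinite _
  have hkey : (Nat.card ↥C) = Fintype.card ↥C := Nat.card_eq_fintype_card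
  rw [hkey, ← IsCyclic.card_orderOf_eq_totient (α := ↥C) (d := Fintype.card ↥C) dvd_rfl]
  apply Finset.card_bij (fun g hg => (⟨g, by
    rw [← (Finset.mem_filter.mp hg).2]; exact Subgroup.mem_zpowers g⟩ : ↥C))
  · intro g hg
    obtain ⟨-, hzp⟩ := Finset.mem_filter.mp hg
    simp only [Finset.mem_filter, Finset.mem_univ, true_and]
    rw [Subgroup.orderOf_mk, ← Nat.card_zpowers, hzp, hkey]
  · intro g1 h1 g2 h2 heq
    simpa using congrArg (Subtype.val) heq
  · intro a ha
    simp only [Finset.mem_filter, Finset.mem_univ, true_and] at ha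
    have hzp : Subgroup.zpowers (a : G) = C := by
      apply Subgroup.eq_of_le_of_card_ge (Subgroup.zpowers_le.mpr a.2)
      rw [Nat.card_zpowers, Subgroup.orderOf_coe, ha, hkey]
    refine ⟨(a : G), Finset.mem_filter.mpr ⟨Finset.mem_univ _, hzp⟩, ?_⟩
    ext
    rfl

lemma card_eq_sum_totient (X : Subgroup G) [Fintype G] :
    ((Nat.card X : ℚ)) = ∑ C : Subgroup G,
      (if C ≤ X ∧ IsCyclic C then (Nat.totient (Nat.card C) : ℚ) else 0) := by
  have : (Nat.card X) = ∑ C : Subgroup G,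
      (if C ≤ X ∧ IsCyclic C then Nat.totient (Nat.card C) else 0) := by
    rw [Nat.card_eq_fintype_card, Fintype.card_subtype,
      Finset.card_eq_sum_card_fiberwise (f := fun g => Subgroup.zpowers g)
        (t := Finset.univ) (fun _ _ => Finset.mem_univ _)]
    apply Finset.sum_congr rfl
    intro C _
    rw [Finset.filter_filter]
    by_cases hC : C ≤ X ∧ IsCyclic C
    · rw [if_pos hC, ← card_generators C hC.2]
      congr 1
      apply Finset.filter_congr
      intro g _
      constructor
      · rintro ⟨-, h⟩; exact h
      · intro h; exact ⟨hC.1 (h ▸ Subgroup.mem_zpowers g), h⟩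
    · rw [if_neg hC, Finset.card_eq_zero, Finset.filter_eq_empty_iff]
      rintro g - ⟨hgX, hzp⟩
      exact hC ⟨hzp ▸ Subgroup.zpowers_le.mpr hgX, hzp ▸ isCyclic_zpowers g⟩
  rw [this]
  push_cast
  apply Finset.sum_congr rfl
  intro C _
  split <;> norm_num

end Totient
lemma qsum_powerset_neg_one_pow_card {α : Type*} [DecidableEq α] {x : Finset α} :
    (∑ m ∈ x.powerset, (-1 : ℚ) ^ m.card) = if x = ∅ then 1 else 0 := by
  have h := Finset.sum_powerset_neg_one_pow_card (x := x)
  have h2 : ((∑ m ∈ x.powerset, (-1 : ℤ) ^ m.card : ℤ) : ℚ)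
      = ∑ m ∈ x.powerset, (-1 : ℚ) ^ m.card := by push_cast; rfl
  rw [← h2, h]
  split <;> norm_num

/-- Main Theorem: for a finite non-cyclic group `G` and `N ⊴ G`, with `H₁, …, Hₙ` the
maximal subgroups of `G` containing `N` and `H_σ = ⨅_{j ∈ σ} H_j` for `σ ⊆ {1, …, n}`,
`m_{G,N} = (1/|G|) Σ_{C cyclic} Σ_{i=1}^{n} Σ_{σ, |σ| = i, C ≤ H_σ}
  (-1)^i χ̃(T_C(G, H_σ)) φ(|C|)`. -/
theorem mGN_eq_inclusion_exclusion (G : Type*) [Group G] [Finite G]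
    (hG : ¬ IsCyclic G) (N : Subgroup G) [N.Normal]
    (n : ℕ) (H : Fin n → Subgroup G) (hinj : Function.Injective H)
    (hrange : Set.range H = {K : Subgroup G | IsCoatom K ∧ N ≤ K}) :
    mGN G N = (1 / (Nat.card G : ℚ)) *
      ∑ C : Subgroup G,
        if IsCyclic ↥C then
          ∑ i ∈ Finset.Icc 1 n,
            ∑ σ ∈ Finset.univ.filter
                (fun σ : Finset (Fin n) => σ.card = i ∧ C ≤ ⨅ j ∈ σ, H j),
              (-1 : ℚ) ^ i *
                reducedEulerChar G
                  {X : Subgroup G | C ≤ X ∧ X < ⊤ ∧ ¬ X ≤ ⨅ j ∈ σ, H j} *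
                (Nat.totient (Nat.card C) : ℚ)
        else 0 := by
  classical
  haveI : Fintype G := Fintype.ofFinite G
  have hHj : ∀ j, IsCoatom (H j) ∧ N ≤ H j := fun j => by
    have : H j ∈ Set.range H := Set.mem_range_self j
    rwa [hrange] at this
  have hcond : ∀ X : Subgroup G,
      ((X : Set G) * (N : Set G) = (Set.univ : Set G)) ↔ (∀ j, ¬ X ≤ H j) := by
    intro X
    rw [← Subgroup.mul_normal X N,
      show (Set.univ : Set G) = ((⊤ : Subgroup G) : Set G) from rfl]
    rw [show ((↑(X ⊔ N) : Set G) = ((⊤ : Subgroup G) : Set G)) ↔ X ⊔ N = ⊤ from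
      ⟨fun h => SetLike.coe_injective h, fun h => by rw [h]⟩]
    constructor
    · intro h j hXj
      have h1 : X ⊔ N ≤ H j := sup_le hXj (hHj j).2
      rw [h] at h1
      exact (hHj j).1.1 (top_le_iff.mp h1)
    · intro h
      by_contra hne
      rcases eq_top_or_exists_le_coatom (X ⊔ N) with h1 | ⟨K, hK, hle⟩
      · exact hne h1
      · have hNK : N ≤ K := le_sup_right.trans hle
        have hmem : K ∈ Set.range H := by rw [hrange]; exact ⟨hK, hNK⟩
        obtain ⟨j, rfl⟩ := hmem
        exact h j (le_sup_left.trans hle)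
  have hHσ_top : ∀ σ : Finset (Fin n), σ.Nonempty → (⨅ j ∈ σ, H j) < ⊤ := by
    rintro σ ⟨j, hj⟩
    exact lt_of_le_of_lt (iInf₂_le j hj) (lt_top_iff_ne_top.mpr (hHj j).1.1)
  have hIE : ∀ X : Subgroup G, (if (∀ j, ¬ X ≤ H j) then (1 : ℚ) else 0) =
      ∑ σ : Finset (Fin n),
        ((-1 : ℚ) ^ σ.card * (if X ≤ ⨅ j ∈ σ, H j then 1 else 0)) := by
    intro X
    set SX := Finset.univ.filter (fun j => X ≤ H j) with hSX
    have hle : ∀ σ : Finset (Fin n), (X ≤ ⨅ j ∈ σ, H j) ↔ σ ⊆ SX := by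
      intro σ
      rw [le_iInf₂_iff]
      constructor
      · intro h j hj; exact Finset.mem_filter.mpr ⟨Finset.mem_univ _, h j hj⟩
      · intro h j hj; exact (Finset.mem_filter.mp (h hj)).2
    have h2 : ∑ σ : Finset (Fin n),
        ((-1 : ℚ) ^ σ.card * (if X ≤ ⨅ j ∈ σ, H j then 1 else 0)) =
        ∑ σ ∈ SX.powerset, (-1 : ℚ) ^ σ.card := by
      rw [← Finset.sum_subset (Finset.subset_univ SX.powerset) ?_]
      · apply Finset.sum_congr rfl
        intro σ hσ
        rw [if_pos ((hle σ).mpr (Finset.mem_powerset.mp hσ)), mul_one]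
      · intro σ _ hσ
        rw [if_neg (fun h => hσ (Finset.mem_powerset.mpr ((hle σ).mp h))), mul_zero]
    rw [h2, qsum_powerset_neg_one_pow_card]
    apply if_congr _ rfl rfl
    rw [hSX, Finset.filter_eq_empty_iff]
    simp
  have hinner : ∀ C : Subgroup G, IsCyclic C →
      (∑ X : Subgroup G, (if (∀ j, ¬ X ≤ H j) ∧ C ≤ X then subgroupMu G X ⊤ else 0)) =
      ∑ σ : Finset (Fin n),
        (if σ.Nonempty ∧ C ≤ ⨅ j ∈ σ, H j then
          (-1 : ℚ) ^ σ.card *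
            reducedEulerChar G {X : Subgroup G | C ≤ X ∧ X < ⊤ ∧ ¬ X ≤ ⨅ j ∈ σ, H j}
        else 0) := by
    intro C hcyc
    have hCne : C ≠ ⊤ := by
      rintro rfl
      exact hG (isCyclic_of_surjective Subgroup.topEquiv.toMonoidHom
        Subgroup.topEquiv.surjective)
    have step1 : ∀ X : Subgroup G,
        (if (∀ j, ¬ X ≤ H j) ∧ C ≤ X then subgroupMu G X ⊤ else 0) =
        ∑ σ : Finset (Fin n), ((-1 : ℚ) ^ σ.card *
          (if C ≤ X ∧ X ≤ ⨅ j ∈ σ, H j then subgroupMu G X ⊤ else 0)) := by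
      intro X
      have hsp : (if (∀ j, ¬ X ≤ H j) ∧ C ≤ X then subgroupMu G X ⊤ else 0) =
          (if (∀ j, ¬ X ≤ H j) then (1 : ℚ) else 0) *
          (if C ≤ X then subgroupMu G X ⊤ else 0) := by
        by_cases h1 : ∀ j, ¬ X ≤ H j
        · by_cases h2 : C ≤ X
          · rw [if_pos ⟨h1, h2⟩, if_pos h1, if_pos h2, one_mul]
          · rw [if_neg (fun h => h2 h.2), if_pos h1, if_neg h2, mul_zero]
        · rw [if_neg (fun h => h1 h.1), if_neg h1, zero_mul]
      rw [hsp, hIE X, Finset.sum_mul]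
      apply Finset.sum_congr rfl
      intro σ _
      rw [mul_assoc]
      congr 1
      by_cases h2 : C ≤ X <;> by_cases h3 : X ≤ ⨅ j ∈ σ, H j <;> simp [h2, h3]
    rw [Finset.sum_congr rfl (fun X _ => step1 X), Finset.sum_comm]
    apply Finset.sum_congr rfl
    intro σ _
    rw [← Finset.mul_sum]
    by_cases hne : σ.Nonempty
    · by_cases hCH : C ≤ ⨅ j ∈ σ, H j
      · rw [if_pos ⟨hne, hCH⟩, key_identity C _ hCH (hHσ_top σ hne)]
      · rw [if_neg (fun h => hCH h.2)]
        have hz : ∑ X : Subgroup G,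
            (if C ≤ X ∧ X ≤ ⨅ j ∈ σ, H j then subgroupMu G X ⊤ else 0) = 0 :=
          Finset.sum_eq_zero (fun X _ => if_neg (fun h => hCH (h.1.trans h.2)))
        rw [hz, mul_zero]
    · rw [if_neg (fun h => hne h.1)]
      have hσe : σ = ∅ := Finset.not_nonempty_iff_eq_empty.mp hne
      subst hσe
      have hz : ∑ X : Subgroup G, (if C ≤ X ∧ X ≤ ⨅ j ∈ (∅ : Finset (Fin n)), H j
          then subgroupMu G X ⊤ else 0) = 0 := by
        have h1 : ∀ X : Subgroup G,
            (C ≤ X ∧ X ≤ ⨅ j ∈ (∅ : Finset (Fin n)), H j) ↔ C ≤ X := by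
          intro X; simp
        rw [Finset.sum_congr rfl (fun X _ => by rw [if_congr (h1 X) rfl rfl]), sum_mu,
          if_neg hCne]
      rw [hz, mul_zero]
  -- assembly
  rw [mGN]
  congr 1
  have stepA : ∀ X : Subgroup G,
      (if (X : Set G) * (N : Set G) = (Set.univ : Set G)
       then (Nat.card X : ℚ) * subgroupMu G X ⊤ else 0) =
      ∑ C : Subgroup G, (if (C ≤ X ∧ IsCyclic C) ∧ (∀ j, ¬ X ≤ H j)
        then (Nat.totient (Nat.card C) : ℚ) * subgroupMu G X ⊤ else 0) := by
    intro X
    by_cases hc : ∀ j, ¬ X ≤ H j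
    · rw [if_pos ((hcond X).mpr hc), card_eq_sum_totient X, Finset.sum_mul]
      apply Finset.sum_congr rfl
      intro C _
      rw [ite_mul, zero_mul]
      by_cases hP : C ≤ X ∧ IsCyclic C
      · rw [if_pos hP, if_pos ⟨hP, hc⟩]
      · rw [if_neg hP, if_neg (fun h => hP h.1)]
    · rw [if_neg (fun h => hc ((hcond X).mp h))]
      symm
      exact Finset.sum_eq_zero (fun C _ => if_neg (fun h => hc h.2))
  rw [Finset.sum_congr rfl (fun X _ => stepA X), Finset.sum_comm]
  apply Finset.sum_congr rfl
  intro C _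
  by_cases hcyc : IsCyclic C
  · rw [if_pos hcyc]
    have hL : ∑ X : Subgroup G, (if (C ≤ X ∧ IsCyclic C) ∧ (∀ j, ¬ X ≤ H j)
        then (Nat.totient (Nat.card C) : ℚ) * subgroupMu G X ⊤ else 0) =
        (Nat.totient (Nat.card C) : ℚ) *
          ∑ X : Subgroup G,
            (if (∀ j, ¬ X ≤ H j) ∧ C ≤ X then subgroupMu G X ⊤ else 0) := by
      rw [Finset.mul_sum]
      apply Finset.sum_congr rfl
      intro X _
      by_cases h1 : C ≤ X <;> by_cases h2 : ∀ j, ¬ X ≤ H j <;> simp [h1, h2, hcyc]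
    rw [hL, hinner C hcyc]
    have hR : ∑ i ∈ Finset.Icc 1 n,
        ∑ σ ∈ Finset.univ.filter
            (fun σ : Finset (Fin n) => σ.card = i ∧ C ≤ ⨅ j ∈ σ, H j),
          (-1 : ℚ) ^ i *
            reducedEulerChar G {X : Subgroup G | C ≤ X ∧ X < ⊤ ∧ ¬ X ≤ ⨅ j ∈ σ, H j} *
            (Nat.totient (Nat.card C) : ℚ) =
        ∑ σ : Finset (Fin n),
          (if σ.Nonempty ∧ C ≤ ⨅ j ∈ σ, H j then
            (-1 : ℚ) ^ σ.card *
              reducedEulerChar G {X : Subgroup G | C ≤ X ∧ X < ⊤ ∧ ¬ X ≤ ⨅ j ∈ σ, H j} *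
              (Nat.totient (Nat.card C) : ℚ)
          else 0) := by
      simp_rw [Finset.sum_filter]
      rw [Finset.sum_comm]
      apply Finset.sum_congr rfl
      intro σ _
      have hmem : σ.card ∈ Finset.Icc 1 n ↔ σ.Nonempty := by
        rw [Finset.mem_Icc]
        constructor
        · rintro ⟨h1, -⟩; exact Finset.card_pos.mp h1
        · intro h
          exact ⟨Finset.card_pos.mpr h, le_trans (Finset.card_le_univ σ) (by simp)⟩
      by_cases hCH : C ≤ ⨅ j ∈ σ, H j
      · have heq : ∀ i ∈ Finset.Icc 1 n,
            (if σ.card = i ∧ C ≤ ⨅ j ∈ σ, H j then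
              (-1 : ℚ) ^ i *
                reducedEulerChar G
                  {X : Subgroup G | C ≤ X ∧ X < ⊤ ∧ ¬ X ≤ ⨅ j ∈ σ, H j} *
                (Nat.totient (Nat.card C) : ℚ)
            else 0) =
            (if σ.card = i then
              (-1 : ℚ) ^ i *
                reducedEulerChar G
                  {X : Subgroup G | C ≤ X ∧ X < ⊤ ∧ ¬ X ≤ ⨅ j ∈ σ, H j} *
                (Nat.totient (Nat.card C) : ℚ)
            else 0) := by
          intro i _
          simp [hCH]
        rw [Finset.sum_congr rfl heq, Finset.sum_ite_eq]
        exact if_congr (hmem.trans (and_iff_left hCH).symm) rfl rfl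
      · rw [if_neg (fun h => hCH h.2)]
        exact Finset.sum_eq_zero (fun i _ => if_neg (fun h => hCH h.2))
    rw [hR, Finset.mul_sum]
    apply Finset.sum_congr rfl
    intro σ _
    by_cases hP : σ.Nonempty ∧ C ≤ ⨅ j ∈ σ, H j
    · rw [if_pos hP, if_pos hP]; ring
    · rw [if_neg hP, if_neg hP, mul_zero]
  · rw [if_neg hcyc]
    exact Finset.sum_eq_zero (fun X _ => if_neg (fun h => hcyc h.1.2))
end

section
/- Let G be a finite group and let N be a normal subgroup of G which is maximal (with respect to inclusion) among normal subgroups M of G satisfying m_{G,M} ≠ 0. Then the quotient group G/N is a B-group. -/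
open scoped Classical Pointwise

/-- A finite group `G` is a `B`-group if `m_{G,N} = 0` for every nontrivial normal
subgroup `N` of `G`. -/
def IsBGroup (G : Type*) [Group G] [Finite G] : Prop :=
  ∀ N : Subgroup G, N.Normal → N ≠ ⊥ → mGN G N = 0

set_option linter.unusedSectionVars false

namespace BAux

section Mu

variable (G : Type*) [Group G] [Finite G]

noncomputable def zeta : Matrix (Subgroup G) (Subgroup G) ℚ :=
  Matrix.of fun K D : Subgroup G => if K ≤ D then (1 : ℚ) else 0

lemma zeta_blockTriangular :
    (zeta G).BlockTriangular (fun S : Subgroup G => Nat.card S) := by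
  intro i j h
  simp only [zeta, Matrix.of_apply, ite_eq_right_iff]
  intro hle
  exact absurd (Subgroup.card_le_of_le hle) (not_le.mpr h)

lemma zeta_det : (zeta G).det = 1 := by
  rw [(zeta_blockTriangular G).det]
  refine Finset.prod_eq_one fun a _ => ?_
  have h1 : (zeta G).toSquareBlock (fun S : Subgroup G => Nat.card S) a = 1 := by
    ext i j
    simp only [Matrix.toSquareBlock_def, zeta, Matrix.of_apply, Matrix.one_apply]
    by_cases hij : i = j
    · simp [hij]
    · have hne : ¬ (i : Subgroup G) ≤ (j : Subgroup G) := by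
        intro hle
        exact hij (Subtype.ext (Subgroup.eq_of_le_of_card_ge hle (by rw [i.2, j.2])))
      simp [hne, hij]
  rw [h1, Matrix.det_one]

lemma zeta_isUnit_det : IsUnit (zeta G).det := by
  rw [zeta_det]; exact isUnit_one

lemma zeta_mul_mu : zeta G * subgroupMu G = 1 :=
  Matrix.mul_nonsing_inv _ (zeta_isUnit_det G)

lemma mu_mul_zeta : subgroupMu G * zeta G = 1 :=
  Matrix.nonsing_inv_mul _ (zeta_isUnit_det G)

lemma sum_mu (K : Subgroup G) :
    (∑ X : Subgroup G, if K ≤ X then subgroupMu G X ⊤ else 0) =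
      if K = ⊤ then (1 : ℚ) else 0 := by
  have h : (zeta G * subgroupMu G) K ⊤ = (1 : Matrix (Subgroup G) (Subgroup G) ℚ) K ⊤ := by
    rw [zeta_mul_mu]
  rw [Matrix.mul_apply, Matrix.one_apply] at h
  simpa only [zeta, Matrix.of_apply, ite_mul, one_mul, zero_mul] using h

end Mu

section Fiber

variable {G : Type*} [Group G] [Finite G]

/-- For `Y ≠ ⊤`, every "fiber sum" of the Möbius column vanishes. -/
lemma fiber_sum_zero {Y : Subgroup G} (hY : Y ≠ ⊤) (S : Subgroup G) :
    (∑ X : Subgroup G, if X ⊓ Y = S then subgroupMu G X ⊤ else 0) = 0 := by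
  by_contra hbad
  set bad : Set (Subgroup G) :=
    {S | (∑ X : Subgroup G, if X ⊓ Y = S then subgroupMu G X ⊤ else 0) ≠ 0} with hbadset
  have hSmem : S ∈ bad := hbad
  obtain ⟨T, hTmem, hTmax⟩ :=
    Set.Finite.exists_maximalFor id bad (Set.toFinite bad) ⟨S, hSmem⟩
  have hTY : T ≤ Y := by
    by_contra hTY
    apply hTmem
    refine Finset.sum_eq_zero fun X _ => ?_
    have : ¬ (X ⊓ Y = T) := fun h => hTY (h ▸ inf_le_right)
    simp [this]
  have hTne : T ≠ ⊤ := fun h => hY (top_le_iff.mp (h ▸ hTY))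
  have hR : (∑ X : Subgroup G, if T ≤ X ⊓ Y then subgroupMu G X ⊤ else 0) = 0 := by
    have hiff : ∀ X : Subgroup G, (T ≤ X ⊓ Y) ↔ (T ≤ X) := fun X =>
      ⟨fun h => h.trans inf_le_left, fun h => le_inf h hTY⟩
    calc (∑ X : Subgroup G, if T ≤ X ⊓ Y then subgroupMu G X ⊤ else 0)
        = ∑ X : Subgroup G, if T ≤ X then subgroupMu G X ⊤ else 0 := by
          refine Finset.sum_congr rfl fun X _ => by rw [if_congr (hiff X) rfl rfl]
      _ = if T = ⊤ then 1 else 0 := sum_mu G T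
      _ = 0 := by simp [hTne]
  have hsplit : (∑ X : Subgroup G, if T ≤ X ⊓ Y then subgroupMu G X ⊤ else 0) =
      (∑ X : Subgroup G, if X ⊓ Y = T then subgroupMu G X ⊤ else 0) +
      (∑ X : Subgroup G, if T < X ⊓ Y then subgroupMu G X ⊤ else 0) := by
    rw [← Finset.sum_add_distrib]
    refine Finset.sum_congr rfl fun X _ => ?_
    by_cases h1 : X ⊓ Y = T
    · simp [h1, lt_irrefl]
    · by_cases h2 : T < X ⊓ Y
      · simp [h1, h2, h2.le]
      · have : ¬ T ≤ X ⊓ Y := fun h => h2 (lt_of_le_of_ne h (fun hh => h1 hh.symm))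
        simp [h1, h2, this]
  have hsecond : (∑ X : Subgroup G, if T < X ⊓ Y then subgroupMu G X ⊤ else 0) = 0 := by
    have rw1 : ∀ X : Subgroup G,
        (if T < X ⊓ Y then subgroupMu G X ⊤ else 0) =
        ∑ U : Subgroup G, if X ⊓ Y = U then (if T < U then subgroupMu G X ⊤ else 0) else 0 := by
      intro X
      rw [Finset.sum_ite_eq Finset.univ (X ⊓ Y)
        (fun U => if T < U then subgroupMu G X ⊤ else 0)]
      simp
    calc (∑ X : Subgroup G, if T < X ⊓ Y then subgroupMu G X ⊤ else 0)
        = ∑ X : Subgroup G, ∑ U : Subgroup G,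
            if X ⊓ Y = U then (if T < U then subgroupMu G X ⊤ else 0) else 0 :=
          Finset.sum_congr rfl fun X _ => rw1 X
      _ = ∑ U : Subgroup G, ∑ X : Subgroup G,
            if X ⊓ Y = U then (if T < U then subgroupMu G X ⊤ else 0) else 0 :=
          Finset.sum_comm
      _ = 0 := by
          refine Finset.sum_eq_zero fun U _ => ?_
          by_cases hTU : T < U
          · have hU0 : (∑ X : Subgroup G, if X ⊓ Y = U then subgroupMu G X ⊤ else 0) = 0 := by
              by_contra hU
              exact absurd (hTmax (j := U) hU hTU.le) (not_le_of_gt hTU)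
            simpa [hTU] using hU0
          · simp [hTU]
  rw [hsplit, hsecond, add_zero] at hR
  exact hTmem hR

/-- Key vanishing lemma: sums of `μ(X,⊤) F(X ⊓ Y)` vanish when `Y ≠ ⊤`. -/
lemma sum_mu_inf_zero {Y : Subgroup G} (hY : Y ≠ ⊤) (F : Subgroup G → ℚ) :
    (∑ X : Subgroup G, subgroupMu G X ⊤ * F (X ⊓ Y)) = 0 := by
  have rw1 : ∀ X : Subgroup G, subgroupMu G X ⊤ * F (X ⊓ Y) =
      ∑ U : Subgroup G, if X ⊓ Y = U then subgroupMu G X ⊤ * F U else 0 := by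
    intro X
    rw [Finset.sum_ite_eq Finset.univ (X ⊓ Y) (fun U => subgroupMu G X ⊤ * F U)]
    simp
  calc (∑ X : Subgroup G, subgroupMu G X ⊤ * F (X ⊓ Y))
      = ∑ X : Subgroup G, ∑ U : Subgroup G,
          if X ⊓ Y = U then subgroupMu G X ⊤ * F U else 0 :=
        Finset.sum_congr rfl fun X _ => rw1 X
    _ = ∑ U : Subgroup G, (∑ X : Subgroup G,
          if X ⊓ Y = U then subgroupMu G X ⊤ else 0) * F U := by
        rw [Finset.sum_comm]
        refine Finset.sum_congr rfl fun U _ => ?_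
        rw [Finset.sum_mul]
        exact Finset.sum_congr rfl fun X _ => by rw [ite_mul, zero_mul]
    _ = 0 := Finset.sum_eq_zero fun U _ => by rw [fiber_sum_zero hY U, zero_mul]

end Fiber

section Cards

variable {G : Type*} [Group G] [Finite G]

lemma card_subgroupOf {H K : Subgroup G} (h : H ≤ K) :
    Nat.card (H.subgroupOf K) = Nat.card H :=
  Nat.card_congr (Subgroup.subgroupOfEquivOfLe h).toEquiv

lemma card_inf_mul_relindex (N X : Subgroup G) :
    Nat.card ↥(N ⊓ X) * N.relIndex X = Nat.card X := by
  have h := Subgroup.card_mul_index (G := ↥X) ((N ⊓ X).subgroupOf X)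
  rw [card_subgroupOf inf_le_right, Subgroup.inf_subgroupOf_right] at h
  exact h

lemma card_N_mul_relindex (N X : Subgroup G) [N.Normal] :
    Nat.card N * N.relIndex X = Nat.card ↥(X ⊔ N) := by
  have h := card_inf_mul_relindex N (X ⊔ N)
  rwa [inf_of_le_left (le_sup_right : N ≤ X ⊔ N), Subgroup.relIndex_sup_right] at h

/-- Product formula `|X| |N| = |X ⊔ N| |X ⊓ N|` for normal `N`. -/
lemma card_prod (N X : Subgroup G) [N.Normal] :
    Nat.card X * Nat.card N = Nat.card ↥(X ⊔ N) * Nat.card ↥(X ⊓ N) := by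
  rw [← card_inf_mul_relindex N X, ← card_N_mul_relindex N X, inf_comm]
  ring

/-- `|map π X| |N| = |X ⊔ N|` for `π` the quotient map by `N`. -/
lemma card_map_mul (N X : Subgroup G) [N.Normal] :
    Nat.card ↥(Subgroup.map (QuotientGroup.mk' N) X) * Nat.card N = Nat.card ↥(X ⊔ N) := by
  have hrange : (((QuotientGroup.mk' N)).comp X.subtype).range =
      Subgroup.map (QuotientGroup.mk' N) X := by
    rw [MonoidHom.range_comp, Subgroup.range_subtype]
  have hker : (((QuotientGroup.mk' N)).comp X.subtype).ker = N.subgroupOf X := by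
    rw [← MonoidHom.comap_ker, QuotientGroup.ker_mk']
    rfl
  have hcard : Nat.card ↥(Subgroup.map (QuotientGroup.mk' N) X) = N.relIndex X := by
    rw [← hrange]
    rw [Nat.card_congr (QuotientGroup.quotientKerEquivRange
      ((QuotientGroup.mk' N).comp X.subtype)).toEquiv.symm]
    rw [hker, Subgroup.relIndex, Subgroup.index_eq_card]
  rw [hcard, mul_comm, card_N_mul_relindex]

/-- `|X| = |map π X| * |X ⊓ N|` in `ℚ`. -/
lemma card_eq_card_map_mul (N X : Subgroup G) [N.Normal] :
    (Nat.card X : ℚ) =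
      (Nat.card ↥(Subgroup.map (QuotientGroup.mk' N) X) : ℚ) * Nat.card ↥(X ⊓ N) := by
  have h : Nat.card X * Nat.card N =
      (Nat.card ↥(Subgroup.map (QuotientGroup.mk' N) X) * Nat.card ↥(X ⊓ N)) * Nat.card N := by
    rw [card_prod N X, ← card_map_mul N X]; ring
  have hN : Nat.card N ≠ 0 := Nat.card_pos.ne'
  have h2 : Nat.card X =
      Nat.card ↥(Subgroup.map (QuotientGroup.mk' N) X) * Nat.card ↥(X ⊓ N) :=
    Nat.eq_of_mul_eq_mul_right (Nat.pos_of_ne_zero hN) h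
  exact_mod_cast congrArg (fun n : ℕ => (n : ℚ)) h2

end Cards

section Correspondence

variable {G : Type*} [Group G] [Finite G]

lemma comap_map (N X : Subgroup G) [N.Normal] :
    Subgroup.comap (QuotientGroup.mk' N) (Subgroup.map (QuotientGroup.mk' N) X) = X ⊔ N := by
  rw [Subgroup.comap_map_eq, QuotientGroup.ker_mk']

lemma map_comap (N : Subgroup G) [N.Normal] (Yb : Subgroup (G ⧸ N)) :
    Subgroup.map (QuotientGroup.mk' N) (Subgroup.comap (QuotientGroup.mk' N) Yb) = Yb :=
  Subgroup.map_comap_eq_self_of_surjective (QuotientGroup.mk'_surjective N) Yb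

lemma comap_inj (N : Subgroup G) [N.Normal] {A B : Subgroup (G ⧸ N)}
    (h : Subgroup.comap (QuotientGroup.mk' N) A = Subgroup.comap (QuotientGroup.mk' N) B) :
    A = B :=
  Subgroup.comap_injective (QuotientGroup.mk'_surjective N) h

lemma map_N (N : Subgroup G) [N.Normal] :
    Subgroup.map (QuotientGroup.mk' N) N = ⊥ := by
  rw [eq_bot_iff, Subgroup.map_le_iff_le_comap, MonoidHom.comap_bot, QuotientGroup.ker_mk']

lemma le_comap_N (N : Subgroup G) [N.Normal] (Kb : Subgroup (G ⧸ N)) :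
    N ≤ Subgroup.comap (QuotientGroup.mk' N) Kb := by
  have h : Subgroup.comap (QuotientGroup.mk' N) ⊥ ≤ Subgroup.comap (QuotientGroup.mk' N) Kb :=
    Subgroup.comap_mono bot_le
  rwa [MonoidHom.comap_bot, QuotientGroup.ker_mk'] at h

lemma map_top' (N : Subgroup G) [N.Normal] :
    Subgroup.map (QuotientGroup.mk' N) ⊤ = ⊤ := by
  rw [← MonoidHom.range_eq_map, MonoidHom.range_eq_top_of_surjective _
    (QuotientGroup.mk'_surjective N)]

lemma map_eq_top_iff (N X : Subgroup G) [N.Normal] :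
    Subgroup.map (QuotientGroup.mk' N) X = ⊤ ↔ X ⊔ N = ⊤ := by
  constructor
  · intro h
    have h2 := congrArg (Subgroup.comap (QuotientGroup.mk' N)) h
    rwa [comap_map, Subgroup.comap_top] at h2
  · intro h
    have h2 := congrArg (Subgroup.map (QuotientGroup.mk' N)) h
    rw [Subgroup.map_sup, map_N, sup_bot_eq, map_top'] at h2
    exact h2

lemma le_map_iff (N X : Subgroup G) [N.Normal] (Kb : Subgroup (G ⧸ N)) :
    Kb ≤ Subgroup.map (QuotientGroup.mk' N) X ↔
      Subgroup.comap (QuotientGroup.mk' N) Kb ≤ X ⊔ N := by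
  constructor
  · intro h
    have h2 := Subgroup.comap_mono (f := QuotientGroup.mk' N) h
    rwa [comap_map] at h2
  · intro h
    have h2 := Subgroup.map_mono (f := QuotientGroup.mk' N) h
    rwa [map_comap, Subgroup.map_sup, map_N, sup_bot_eq] at h2

/-- Modular law for normal `N ≤ K`. -/
lemma modular (N K X : Subgroup G) [N.Normal] (hNK : N ≤ K) :
    K ≤ X ⊔ N ↔ (X ⊓ K) ⊔ N = K := by
  constructor
  · intro h
    refine le_antisymm (sup_le (inf_le_right) hNK) ?_
    intro g hg
    have hg' : g ∈ (X ⊔ N : Subgroup G) := h hg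
    rw [← SetLike.mem_coe, Subgroup.mul_normal X N] at hg'
    obtain ⟨x, hx, n, hn, rfl⟩ := hg'
    have hxK : x ∈ K := by
      have h3 : (x * n) * n⁻¹ ∈ K := mul_mem hg (inv_mem (hNK hn))
      simpa using h3
    exact mul_mem (Subgroup.mem_sup_left ⟨hx, hxK⟩) (Subgroup.mem_sup_right hn)
  · intro h
    calc K = (X ⊓ K) ⊔ N := h.symm
      _ ≤ X ⊔ N := sup_le_sup_right inf_le_left N

end Correspondence

section Main

variable (G : Type*) [Group G] [Finite G]

/-- The unnormalized sum appearing in `mGN`, with the condition rewritten via `⊔`. -/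
noncomputable def mSum (N : Subgroup G) : ℚ :=
  ∑ X : Subgroup G, if X ⊔ N = ⊤ then (Nat.card X : ℚ) * subgroupMu G X ⊤ else 0

lemma mGN_eq (N : Subgroup G) [N.Normal] :
    mGN G N = (1 / (Nat.card G : ℚ)) * mSum G N := by
  unfold mGN mSum
  congr 1
  refine Finset.sum_congr rfl fun X _ => ?_
  have hiff : ((X : Set G) * (N : Set G) = (Set.univ : Set G)) ↔ (X ⊔ N = ⊤) := by
    rw [← Subgroup.mul_normal X N, ← Subgroup.coe_top (G := G)]
    exact ⟨fun h => SetLike.coe_injective h, fun h => congrArg _ h⟩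
  rw [if_congr hiff rfl rfl]

lemma Ltop (N : Subgroup G) [N.Normal] :
    (Nat.card G : ℚ) *
      (∑ X : Subgroup G,
        if X ⊔ N = ⊤ then (Nat.card ↥(X ⊓ N) : ℚ) * subgroupMu G X ⊤ else 0)
      = (Nat.card N : ℚ) * mSum G N := by
  unfold mSum
  rw [Finset.mul_sum, Finset.mul_sum]
  refine Finset.sum_congr rfl fun X _ => ?_
  by_cases h : X ⊔ N = ⊤
  · simp only [h, if_true]
    have hc : Nat.card X * Nat.card N = Nat.card G * Nat.card ↥(X ⊓ N) := by
      have h2 := card_prod N X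
      rwa [h, Subgroup.card_top] at h2
    have hq : (Nat.card X : ℚ) * Nat.card N = (Nat.card G : ℚ) * Nat.card ↥(X ⊓ N) := by
      exact_mod_cast congrArg (fun n : ℕ => (n : ℚ)) hc
    rw [← mul_assoc, ← mul_assoc]
    congr 1
    linarith [hq]
  · simp [h]

lemma Lne (N : Subgroup G) [N.Normal] {K : Subgroup G} (hNK : N ≤ K) (hK : K ≠ ⊤) :
    (∑ X : Subgroup G,
      if K ≤ X ⊔ N then (Nat.card ↥(X ⊓ N) : ℚ) * subgroupMu G X ⊤ else 0) = 0 := by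
  have hstep : ∀ X : Subgroup G,
      (if K ≤ X ⊔ N then (Nat.card ↥(X ⊓ N) : ℚ) * subgroupMu G X ⊤ else 0) =
      subgroupMu G X ⊤ *
        (fun S : Subgroup G => if S ⊔ N = K then (Nat.card ↥(S ⊓ N) : ℚ) else 0) (X ⊓ K) := by
    intro X
    have hXinf : X ⊓ K ⊓ N = X ⊓ N := by rw [inf_assoc, inf_eq_right.mpr hNK]
    simp only [hXinf]
    rw [if_congr (modular N K X hNK) rfl rfl]
    by_cases h : (X ⊓ K) ⊔ N = K
    · simp [h, mul_comm]
    · simp [h]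
  rw [Finset.sum_congr rfl fun X _ => hstep X]
  exact sum_mu_inf_zero hK (fun S : Subgroup G => if S ⊔ N = K then (Nat.card ↥(S ⊓ N) : ℚ) else 0)

/-- The key multiplicativity: `m_{G,M} = m_{G,N} · m_{G/N, M/N}`. -/
lemma key (N : Subgroup G) [N.Normal] (Mb : Subgroup (G ⧸ N)) [Mb.Normal] :
    mGN G (Subgroup.comap (QuotientGroup.mk' N) Mb) = mGN G N * mGN (G ⧸ N) Mb := by
  set π := QuotientGroup.mk' N with hπ
  set M := Subgroup.comap π Mb with hM
  set w : Subgroup G → ℚ := fun X => (Nat.card ↥(X ⊓ N) : ℚ) * subgroupMu G X ⊤ with hw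
  set hb : Subgroup (G ⧸ N) → ℚ :=
    fun Yb => ∑ X : Subgroup G, if Subgroup.map π X = Yb then w X else 0 with hhb
  set fb : Subgroup (G ⧸ N) → ℚ :=
    fun Kb => ∑ X : Subgroup G, if Kb ≤ Subgroup.map π X then w X else 0 with hfb
  -- Step 1 : fb = zeta (G ⧸ N) mulVec hb
  have step1 : fb = (zeta (G ⧸ N)).mulVec hb := by
    funext Kb
    have hterm : ∀ Yb : Subgroup (G ⧸ N), zeta (G ⧸ N) Kb Yb * hb Yb =
        ∑ X : Subgroup G,
          if Subgroup.map π X = Yb then (if Kb ≤ Yb then w X else 0) else 0 := by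
      intro Yb
      simp only [zeta, Matrix.of_apply, hhb]
      by_cases h : Kb ≤ Yb
      · simp only [h, if_true, one_mul]
      · simp only [h, if_false, zero_mul]
        exact (Finset.sum_eq_zero fun X _ => by simp).symm
    have hmv : (zeta (G ⧸ N)).mulVec hb Kb =
        ∑ Yb : Subgroup (G ⧸ N), zeta (G ⧸ N) Kb Yb * hb Yb := by
      simp [Matrix.mulVec, dotProduct]
    rw [hmv]
    calc fb Kb
        = ∑ X : Subgroup G, ∑ Yb : Subgroup (G ⧸ N),
            if Subgroup.map π X = Yb then (if Kb ≤ Yb then w X else 0) else 0 := by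
          refine Finset.sum_congr rfl fun X _ => ?_
          rw [Finset.sum_ite_eq Finset.univ (Subgroup.map π X)
            (fun Yb => if Kb ≤ Yb then w X else 0)]
          simp
      _ = ∑ Yb : Subgroup (G ⧸ N), ∑ X : Subgroup G,
            if Subgroup.map π X = Yb then (if Kb ≤ Yb then w X else 0) else 0 :=
          Finset.sum_comm
      _ = ∑ Yb : Subgroup (G ⧸ N), zeta (G ⧸ N) Kb Yb * hb Yb :=
          Finset.sum_congr rfl fun Yb _ => (hterm Yb).symm
  -- Step 2 : fb vanishes away from ⊤
  have step2 : ∀ Kb : Subgroup (G ⧸ N), Kb ≠ ⊤ → fb Kb = 0 := by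
    intro Kb hKb
    have hcond : ∀ X : Subgroup G,
        (Kb ≤ Subgroup.map π X) ↔ (Subgroup.comap π Kb ≤ X ⊔ N) :=
      fun X => le_map_iff N X Kb
    have hrw : fb Kb = ∑ X : Subgroup G,
        if Subgroup.comap π Kb ≤ X ⊔ N then w X else 0 :=
      Finset.sum_congr rfl fun X _ => by rw [if_congr (hcond X) rfl rfl]
    rw [hrw]
    refine Lne G N (le_comap_N N Kb) (fun h => hKb ?_)
    exact comap_inj N (h.trans (Subgroup.comap_top π).symm)
  -- Step 3 : hb Yb = μ(Yb,⊤) fb(⊤)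
  have step3 : ∀ Yb : Subgroup (G ⧸ N),
      hb Yb = subgroupMu (G ⧸ N) Yb ⊤ * fb ⊤ := by
    have hmv : (subgroupMu (G ⧸ N)).mulVec fb = hb := by
      rw [step1, Matrix.mulVec_mulVec, mu_mul_zeta, Matrix.one_mulVec]
    intro Yb
    rw [← congrFun hmv Yb]
    simp only [Matrix.mulVec, dotProduct]
    have hterm : ∀ Kb : Subgroup (G ⧸ N), subgroupMu (G ⧸ N) Yb Kb * fb Kb =
        if Kb = ⊤ then subgroupMu (G ⧸ N) Yb Kb * fb ⊤ else 0 := by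
      intro Kb
      by_cases h : Kb = ⊤
      · simp [h]
      · simp [h, step2 Kb h]
    rw [Finset.sum_congr rfl fun Kb _ => hterm Kb]
    rw [Finset.sum_ite_eq' Finset.univ ⊤ (fun Kb => subgroupMu (G ⧸ N) Yb Kb * fb ⊤)]
    simp
  -- Step 4 : value of fb ⊤
  have step4 : (Nat.card G : ℚ) * fb ⊤ = (Nat.card N : ℚ) * mSum G N := by
    have hrw : fb ⊤ = ∑ X : Subgroup G, if X ⊔ N = ⊤ then w X else 0 := by
      refine Finset.sum_congr rfl fun X _ => ?_
      have hiff : ((⊤ : Subgroup (G ⧸ N)) ≤ Subgroup.map π X) ↔ (X ⊔ N = ⊤) := by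
        rw [top_le_iff]; exact map_eq_top_iff N X
      rw [if_congr hiff rfl rfl]
    rw [hrw]
    exact Ltop G N
  -- Step 5 : mSum G M = fb ⊤ * mSum (G ⧸ N) Mb
  have hNM : N ≤ M := le_comap_N N Mb
  have step5 : mSum G M = fb ⊤ * mSum (G ⧸ N) Mb := by
    set A : Subgroup G → Subgroup (G ⧸ N) → ℚ := fun X Yb =>
      if Subgroup.map π X = Yb then
        (if Yb ⊔ Mb = ⊤ then (Nat.card Yb : ℚ) * w X else 0) else 0 with hA
    have claim51 : ∀ X : Subgroup G,
        (if X ⊔ M = ⊤ then (Nat.card X : ℚ) * subgroupMu G X ⊤ else 0) =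
        ∑ Yb : Subgroup (G ⧸ N), A X Yb := by
      intro X
      rw [Finset.sum_ite_eq Finset.univ (Subgroup.map π X)
        (fun Yb => if Yb ⊔ Mb = ⊤ then (Nat.card Yb : ℚ) * w X else 0)]
      simp only [Finset.mem_univ, if_true]
      have hiff : (X ⊔ M = ⊤) ↔ (Subgroup.map π X ⊔ Mb = ⊤) := by
        have hMb : Subgroup.map π M = Mb := map_comap N Mb
        constructor
        · intro h
          have h2 := congrArg (Subgroup.map π) h
          rw [Subgroup.map_sup, hMb, map_top'] at h2
          exact h2
        · intro h
          have h2 : Subgroup.map π (X ⊔ M) = ⊤ := by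
            rw [Subgroup.map_sup, hMb]; exact h
          rw [map_eq_top_iff] at h2
          rwa [sup_eq_left.mpr (hNM.trans le_sup_right)] at h2
      have hcard : (Nat.card X : ℚ) * subgroupMu G X ⊤ =
          (Nat.card ↥(Subgroup.map π X) : ℚ) * w X := by
        rw [hw, card_eq_card_map_mul N X]; ring
      rw [if_congr hiff rfl rfl, hcard]
    have claim52 : ∀ Yb : Subgroup (G ⧸ N),
        (∑ X : Subgroup G, A X Yb) =
        if Yb ⊔ Mb = ⊤ then (Nat.card Yb : ℚ) * hb Yb else 0 := by
      intro Yb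
      by_cases h : Yb ⊔ Mb = ⊤
      · simp only [h, if_true, hhb, Finset.mul_sum]
        refine Finset.sum_congr rfl fun X _ => ?_
        rw [hA]
        simp only [h, if_true]
        rw [mul_ite, mul_zero]
      · simp only [h, if_false]
        refine Finset.sum_eq_zero fun X _ => ?_
        rw [hA]
        simp [h]
    calc mSum G M
        = ∑ X : Subgroup G, ∑ Yb : Subgroup (G ⧸ N), A X Yb :=
          Finset.sum_congr rfl fun X _ => claim51 X
      _ = ∑ Yb : Subgroup (G ⧸ N), ∑ X : Subgroup G, A X Yb := Finset.sum_comm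
      _ = ∑ Yb : Subgroup (G ⧸ N),
            if Yb ⊔ Mb = ⊤ then (Nat.card Yb : ℚ) * hb Yb else 0 :=
          Finset.sum_congr rfl fun Yb _ => claim52 Yb
      _ = fb ⊤ * mSum (G ⧸ N) Mb := by
          unfold mSum
          rw [Finset.mul_sum]
          refine Finset.sum_congr rfl fun Yb _ => ?_
          rw [step3 Yb]
          by_cases h : Yb ⊔ Mb = ⊤
          · simp only [h, if_true]; ring
          · simp [h]
  -- assemble
  have hGQ : (Nat.card G : ℚ) = (Nat.card (G ⧸ N) : ℚ) * (Nat.card N : ℚ) := by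
    exact_mod_cast congrArg (fun n : ℕ => (n : ℚ))
      (Subgroup.card_eq_card_quotient_mul_card_subgroup N)
  have hG0 : (Nat.card G : ℚ) ≠ 0 := by
    exact_mod_cast (Nat.card_pos (α := G)).ne'
  have hN0 : (Nat.card N : ℚ) ≠ 0 := by
    exact_mod_cast (Nat.card_pos (α := N)).ne'
  have hQ0 : (Nat.card (G ⧸ N) : ℚ) ≠ 0 := by
    exact_mod_cast (Nat.card_pos (α := G ⧸ N)).ne'
  have hfb : fb ⊤ = (Nat.card N : ℚ) * mSum G N / (Nat.card G : ℚ) := by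
    field_simp
    linarith [step4]
  rw [mGN_eq G M, mGN_eq G N, mGN_eq (G ⧸ N) Mb, step5, hfb, hGQ]
  field_simp

end Main

end BAux

/-- If `N ⊴ G` is maximal among normal subgroups `M` with `m_{G,M} ≠ 0`, then `G/N` is a
`B`-group. -/
theorem isBGroup_quotient (G : Type*) [Group G] [Finite G]
    (N : Subgroup G) [N.Normal]
    (hN : mGN G N ≠ 0)
    (hNmax : ∀ M : Subgroup G, M.Normal → mGN G M ≠ 0 → N ≤ M → N = M) :
    IsBGroup (G ⧸ N) := by
  intro Nb hNb hne
  haveI := hNb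
  have hkey := BAux.key G N Nb
  set M := Subgroup.comap (QuotientGroup.mk' N) Nb with hMdef
  have hNM : N ≤ M := BAux.le_comap_N N Nb
  have hM0 : mGN G M = 0 := by
    by_contra h
    have hEq := hNmax M inferInstance h hNM
    apply hne
    have h2 : Nb = Subgroup.map (QuotientGroup.mk' N) M := (BAux.map_comap N Nb).symm
    rw [h2, ← hEq, BAux.map_N]
  rw [hM0] at hkey
  rcases mul_eq_zero.mp hkey.symm with h | h
  · exact absurd h hN
  · exact h
end

section
/- Let G be a finite group. Then G is a B-group if and only if m_{G,N} = 0 for every minimal (nontrivial) normal subgroup N of G. -/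
open scoped Classical Pointwise

/-!
If `K ≤ N` are normal subgroups, then `m_{G,K} = 0` forces `m_{G,N} = 0`, so only minimal normal
subgroups matter. Using `|X| |K| = |X ∩ K| |XK|`, the sum `|G| m_{G,N}` regroups along `Z = XK`
into the sums `E(Z) = Σ_{XK = Z} |X ∩ K| μ(X, G)`, and `E(G) = |K| m_{G,K}`. If `E(G) = 0` then
every `E(Z)` vanishes: by Möbius inversion it suffices that `Σ_{Z ≥ A} E(Z) = 0` for all `A`,
and for `K ≤ A < G` Dedekind's modular law `A ∩ XK = (A ∩ X) K` turns this sum into a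
combination of the sums `Σ_{A ∩ X = W} μ(X, G)`, which vanish by Weisner's theorem.
-/

open Finset IncidenceAlgebra

section MoebiusFunction

variable {𝕜 α : Type*}

theorem zeta_matrix_mul_mu_matrix [Ring 𝕜] [PartialOrder α] [Fintype α] [LocallyFiniteOrder α]
    [DecidableEq α] [DecidableLE α] :
    (Matrix.of fun a b : α => if a ≤ b then (1 : 𝕜) else 0) * Matrix.of (mu 𝕜 : α → α → 𝕜) =
      1 := by
  ext a b
  have h := congrArg (fun f : IncidenceAlgebra 𝕜 α => f a b) (zeta_mul_mu (𝕜 := 𝕜) (α := α))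
  simp only [IncidenceAlgebra.mul_apply, zeta_apply, IncidenceAlgebra.one_apply] at h
  rw [Matrix.mul_apply, Matrix.one_apply, ← h]
  refine (sum_subset (subset_univ _) fun x _ hx => ?_).symm
  rw [mem_Icc, not_and_or] at hx
  rcases hx with hax | hxb
  · simp [hax]
  · simp [apply_eq_zero_of_not_le hxb]

theorem inv_zeta_matrix [CommRing 𝕜] [PartialOrder α] [Fintype α] [LocallyFiniteOrder α]
    [DecidableEq α] [DecidableLE α] :
    (Matrix.of fun a b : α => if a ≤ b then (1 : 𝕜) else 0)⁻¹ = Matrix.of (mu 𝕜 : α → α → 𝕜) :=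
  Matrix.inv_eq_right_inv zeta_matrix_mul_mu_matrix

theorem eq_zero_of_sum_Ici_eq_zero [Ring 𝕜] [PartialOrder α] [OrderTop α] [LocallyFiniteOrder α]
    [DecidableEq α] {f : α → 𝕜} (h : ∀ a, ∑ b ∈ Ici a, f b = 0) (a : α) : f a = 0 := by
  simpa using moebius_inversion_top f 0 (fun x => (h x).symm) a

theorem sum_mu_top_of_inf_eq_eq_zero [Ring 𝕜] [Lattice α] [BoundedOrder α] [Fintype α]
    [LocallyFiniteOrder α] [DecidableEq α] {z : α} (hz : z ≠ ⊤) (w : α) :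
    ∑ x with z ⊓ x = w, mu 𝕜 x ⊤ = 0 := by
  revert w
  refine eq_zero_of_sum_Ici_eq_zero fun a => ?_
  rw [sum_fiberwise_eq_sum_filter]
  by_cases haz : a ≤ z
  · have hfilter : ({x | z ⊓ x ∈ Ici a} : Finset α) = Icc a ⊤ := by
      ext x
      simp [haz]
    rw [hfilter, sum_Icc_mu_left, if_neg (ne_top_of_le_ne_top hz haz)]
  · refine sum_eq_zero fun x hx => absurd ?_ haz
    exact (mem_Ici.1 (mem_filter.1 hx).2).trans inf_le_left

end MoebiusFunction

noncomputable instance (G : Type*) [Group G] [Finite G] : LocallyFiniteOrder (Subgroup G) :=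
  Fintype.toLocallyFiniteOrder

namespace Subgroup

variable {G : Type*} [Group G]

theorem coe_mul_coe_eq_univ_iff {X N : Subgroup G} [N.Normal] :
    (X : Set G) * (N : Set G) = Set.univ ↔ X ⊔ N = ⊤ := by
  rw [← mul_normal, coe_eq_univ]

theorem inf_sup_assoc_of_le {Z : Subgroup G} (X : Subgroup G) {K : Subgroup G} [K.Normal]
    (hKZ : K ≤ Z) : Z ⊓ X ⊔ K = Z ⊓ (X ⊔ K) :=
  SetLike.coe_injective <| by rw [mul_normal, inf_mul_assoc _ _ _ hKZ, coe_inf, mul_normal]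

theorem card_inf_mul_card_sup (X K : Subgroup G) [K.Normal] :
    Nat.card ↥(X ⊓ K) * Nat.card ↥(X ⊔ K) = Nat.card X * Nat.card K := by
  have hX := relIndex_mul_relIndex ⊥ (K ⊓ X) X bot_le inf_le_right
  have hXK := relIndex_mul_relIndex ⊥ K (X ⊔ K) bot_le le_sup_right
  rw [relIndex_bot_left, relIndex_bot_left, inf_relIndex_right] at hX
  rw [relIndex_bot_left, relIndex_bot_left, relIndex_sup_right] at hXK
  rw [← hX, ← hXK, inf_comm]
  ring

end Subgroup

section BGroup

variable {G : Type*} [Group G] [Finite G]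

theorem subgroupMu_apply (X Y : Subgroup G) : subgroupMu G X Y = mu ℚ X Y :=
  congrFun (congrFun inv_zeta_matrix X) Y

theorem card_mul_mGN (N : Subgroup G) [N.Normal] :
    Nat.card G * mGN G N = ∑ X with X ⊔ N = ⊤, (Nat.card X : ℚ) * mu ℚ X ⊤ := by
  have hG : (Nat.card G : ℚ) ≠ 0 := Nat.cast_ne_zero.2 Nat.card_pos.ne'
  rw [mGN, ← mul_assoc, mul_one_div_cancel hG, one_mul, sum_filter]
  simp_rw [Subgroup.coe_mul_coe_eq_univ_iff, subgroupMu_apply]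

theorem sum_card_inf_mul_mu_eq_card_mul_mGN (K : Subgroup G) [K.Normal] :
    ∑ X with X ⊔ K = ⊤, (Nat.card ↥(X ⊓ K) : ℚ) * mu ℚ X ⊤ = Nat.card K * mGN G K := by
  have hG : (Nat.card G : ℚ) ≠ 0 := Nat.cast_ne_zero.2 Nat.card_pos.ne'
  refine mul_left_cancel₀ hG ?_
  rw [mul_left_comm, card_mul_mGN, mul_sum, mul_sum]
  refine sum_congr rfl fun X hX => ?_
  have hcard := Subgroup.card_inf_mul_card_sup X K
  rw [(mem_filter.1 hX).2, Subgroup.card_top] at hcard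
  rw [← mul_assoc, ← mul_assoc, mul_comm (Nat.card G : ℚ), mul_comm (Nat.card K : ℚ)]
  congr 1
  exact_mod_cast hcard

theorem sum_card_inf_mul_mu_of_le_sup_eq_zero {K Z : Subgroup G} [K.Normal] (hKZ : K ≤ Z)
    (hZ : Z ≠ ⊤) : ∑ X with Z ≤ X ⊔ K, (Nat.card ↥(X ⊓ K) : ℚ) * mu ℚ X ⊤ = 0 := by
  calc ∑ X with Z ≤ X ⊔ K, (Nat.card ↥(X ⊓ K) : ℚ) * mu ℚ X ⊤
      = ∑ X with Z ⊓ X ∈ ({W | W ⊔ K = Z} : Finset _),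
          (Nat.card ↥(Z ⊓ X ⊓ K) : ℚ) * mu ℚ X ⊤ := by
        refine sum_congr (filter_congr fun X _ => ?_) fun X _ => by
          rw [inf_comm Z, inf_assoc, inf_eq_right.2 hKZ]
        rw [mem_filter, Subgroup.inf_sup_assoc_of_le X hKZ, inf_eq_left]
        simp
    _ = ∑ W with W ⊔ K = Z, ∑ X with Z ⊓ X = W, (Nat.card ↥(W ⊓ K) : ℚ) * mu ℚ X ⊤ := by
        rw [← sum_fiberwise_eq_sum_filter]
        refine sum_congr rfl fun W _ => sum_congr rfl fun X hX => ?_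
        rw [(mem_filter.1 hX).2]
    _ = 0 := by
        simp_rw [← mul_sum, sum_mu_top_of_inf_eq_eq_zero (𝕜 := ℚ) hZ, mul_zero, sum_const_zero]

theorem sum_card_inf_mul_mu_of_sup_eq_eq_zero {K : Subgroup G} [K.Normal] (hK : mGN G K = 0)
    (Z : Subgroup G) : ∑ X with X ⊔ K = Z, (Nat.card ↥(X ⊓ K) : ℚ) * mu ℚ X ⊤ = 0 := by
  revert Z
  refine eq_zero_of_sum_Ici_eq_zero fun A => ?_
  rw [sum_fiberwise_eq_sum_filter univ (Ici A) (· ⊔ K)]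
  have hA : ∀ X : Subgroup G, X ⊔ K ∈ Ici A ↔ A ⊔ K ≤ X ⊔ K := fun X => by
    simp [le_sup_right]
  simp_rw [hA]
  by_cases hAK : A ⊔ K = ⊤
  · simp_rw [hAK, top_le_iff, sum_card_inf_mul_mu_eq_card_mul_mGN, hK, mul_zero]
  · exact sum_card_inf_mul_mu_of_le_sup_eq_zero le_sup_right hAK

theorem mGN_eq_zero_of_le {K N : Subgroup G} [K.Normal] [N.Normal] (hKN : K ≤ N)
    (hK : mGN G K = 0) : mGN G N = 0 := by
  suffices (Nat.card K : ℚ) * (Nat.card G * mGN G N) = 0 by simpa [Nat.card_pos.ne'] using this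
  calc (Nat.card K : ℚ) * (Nat.card G * mGN G N)
      = ∑ X with X ⊔ K ∈ ({Z | Z ⊔ N = ⊤} : Finset _),
          (Nat.card ↥(X ⊔ K) : ℚ) * ((Nat.card ↥(X ⊓ K) : ℚ) * mu ℚ X ⊤) := by
        rw [card_mul_mGN, mul_sum]
        refine sum_congr (filter_congr fun X _ => ?_) fun X _ => ?_
        · rw [mem_filter, sup_assoc, sup_eq_right.2 hKN]
          simp
        · rw [← mul_assoc, ← mul_assoc, mul_comm (Nat.card K : ℚ)]
          congr 1
          exact_mod_cast (Subgroup.card_inf_mul_card_sup X K).symm.trans (mul_comm _ _)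
    _ = ∑ Z with Z ⊔ N = ⊤, (Nat.card Z : ℚ) *
          ∑ X with X ⊔ K = Z, (Nat.card ↥(X ⊓ K) : ℚ) * mu ℚ X ⊤ := by
        rw [← sum_fiberwise_eq_sum_filter]
        refine sum_congr rfl fun Z _ => ?_
        rw [mul_sum]
        refine sum_congr rfl fun X hX => ?_
        rw [(mem_filter.1 hX).2]
    _ = 0 := by simp_rw [sum_card_inf_mul_mu_of_sup_eq_eq_zero hK, mul_zero, sum_const_zero]

end BGroup

/-- `G` is a `B`-group iff `m_{G,N} = 0` for every minimal (nontrivial) normal subgroup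
`N` of `G`. -/
theorem isBGroup_iff_minimal_normal (G : Type*) [Group G] [Finite G] :
    IsBGroup G ↔
      ∀ N : Subgroup G, N.Normal → N ≠ ⊥ →
        (∀ K : Subgroup G, K.Normal → K ≤ N → K ≠ ⊥ → K = N) → mGN G N = 0 := by
  refine ⟨fun hB N hN hN₀ _ => hB N hN hN₀, fun h N hN hN₀ => ?_⟩
  obtain ⟨K, hKN, ⟨hK, hK₀⟩, hKmin⟩ :=
    exists_minimal_le_of_wellFoundedLT (fun K : Subgroup G => K.Normal ∧ K ≠ ⊥) N ⟨hN, hN₀⟩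
  have := hK
  have := hN
  exact mGN_eq_zero_of_le hKN
    (h K hK hK₀ fun L hL hLK hL₀ => le_antisymm hLK (hKmin ⟨hL, hL₀⟩ hLK))
end
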